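/- arXiv:1008.4014 — 5 statements merged into one kernel-verified Lean document; each statement's English description precedes it below -/
import Mathlib

section
/- The function x ↦ |1 − e^{2πix}|^{−1} is μ-integrable on [0,1], and for every N ≥ 1 one has |Σ_{n=1}^{N} d_n| ≤ ∫₀¹ 2·|1 − e^{2πix}|^{−1} dμ(x); in particular the partial sums Σ_{n=1}^{N} d_n are uniformly bounded in N. -/
/-!
For `0 < x < 1` the partial sum `∑_{n ≤ N} cos (2πnx)` is the real part of a geometric sum in
`z = e^{2πix} ≠ 1`, hence bounded by `2 / |1 - z|`; since `μ` charges neither `0` nor `1`, the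
estimate integrates. For integrability, `|1 - e^{2πix}| = 2 sin (πx) ≥ 4 min (x, 1 - x)`, and the
functional equation gives `Q (1/(n+1)) = 2⁻ⁿ`, so `μ` puts mass `2^{-(n+1)}` on
`(1/(n+2), 1/(n+1)]`, where `1/x ≤ n + 2` (and symmetrically near `1`); `∑ (n + 2) 2^{-(n+1)} < ∞`.
-/

open MeasureTheory Real Set Filter

theorem norm_sum_Icc_pow_le {𝕜 : Type*} [NormedField 𝕜] {z : 𝕜} (hz : ‖z‖ ≤ 1) (hz1 : z ≠ 1)
    (N : ℕ) : ‖∑ n ∈ Finset.Icc 1 N, z ^ n‖ ≤ 2 * ‖1 - z‖⁻¹ := by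
  rw [← Finset.Ico_add_one_right_eq_Icc, geom_sum_Ico hz1 (by omega), norm_div, norm_sub_rev z,
    div_eq_mul_inv, pow_one]
  gcongr
  calc ‖z ^ (N + 1) - z‖ ≤ ‖z ^ (N + 1)‖ + ‖z‖ := norm_sub_le _ _
    _ ≤ 1 + 1 := add_le_add (by rw [norm_pow]; exact pow_le_one₀ (norm_nonneg z) hz) hz
    _ = 2 := one_add_one_eq_two

theorem abs_sum_cos_nat_mul_le {θ : ℝ} (hθ : Complex.exp (θ * Complex.I) ≠ 1) (N : ℕ) :
    |∑ n ∈ Finset.Icc 1 N, cos (n * θ)| ≤ 2 * ‖1 - Complex.exp (θ * Complex.I)‖⁻¹ := by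
  have hre : ∀ n : ℕ, cos (n * θ) = (Complex.exp (θ * Complex.I) ^ n).re := fun n => by
    rw [← Complex.exp_nat_mul, ← mul_assoc, ← Complex.ofReal_natCast, ← Complex.ofReal_mul,
      Complex.exp_ofReal_mul_I_re]
  simp only [hre, ← Complex.re_sum]
  exact (Complex.abs_re_le_norm _).trans
    (norm_sum_Icc_pow_le (Complex.norm_exp_ofReal_mul_I θ).le hθ N)

theorem norm_one_sub_exp_two_pi_mul_I {x : ℝ} (hx : x ∈ Icc (0 : ℝ) 1) :
    ‖1 - Complex.exp (((2 * π * x : ℝ) : ℂ) * Complex.I)‖ = 2 * sin (π * x) := by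
  rw [norm_sub_rev, mul_comm, Complex.norm_exp_I_mul_ofReal_sub_one,
    show 2 * π * x / 2 = π * x by ring, norm_mul, Real.norm_two, Real.norm_of_nonneg]
  exact sin_nonneg_of_nonneg_of_le_pi (by nlinarith [pi_pos, hx.1]) (by nlinarith [pi_pos, hx.2])

theorem two_mul_le_sin_pi_mul {x : ℝ} (h0 : 0 ≤ x) (h1 : x ≤ 1 / 2) : 2 * x ≤ sin (π * x) := by
  have := mul_le_sin (x := π * x) (by positivity) (by nlinarith [pi_pos])
  rwa [← mul_assoc, div_mul_cancel₀ _ pi_ne_zero] at this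

theorem four_mul_min_le_norm_one_sub_exp {x : ℝ} (hx : x ∈ Icc (0 : ℝ) 1) :
    4 * min x (1 - x) ≤ ‖1 - Complex.exp (((2 * π * x : ℝ) : ℂ) * Complex.I)‖ := by
  rw [norm_one_sub_exp_two_pi_mul_I hx]
  rcases le_total x (1 / 2) with h | h
  · linarith [min_le_left x (1 - x), two_mul_le_sin_pi_mul hx.1 h]
  · have := two_mul_le_sin_pi_mul (x := 1 - x) (by linarith [hx.2]) (by linarith)
    rw [show π * (1 - x) = π - π * x by ring, sin_pi_sub] at this
    linarith [min_le_right x (1 - x)]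

theorem inv_norm_one_sub_exp_le {x : ℝ} (hx : x ∈ Ioo (0 : ℝ) 1) :
    ‖1 - Complex.exp (((2 * π * x : ℝ) : ℂ) * Complex.I)‖⁻¹ ≤ x⁻¹ + (1 - x)⁻¹ := by
  have hmin : 0 < min x (1 - x) := lt_min hx.1 (by linarith [hx.2])
  have hle := four_mul_min_le_norm_one_sub_exp (Ioo_subset_Icc_self hx)
  calc ‖1 - Complex.exp (((2 * π * x : ℝ) : ℂ) * Complex.I)‖⁻¹ ≤ (min x (1 - x))⁻¹ :=
        inv_anti₀ hmin (by linarith)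
    _ ≤ x⁻¹ + (1 - x)⁻¹ := by
        rcases min_choice x (1 - x) with h | h <;> rw [h] at hmin ⊢
        · linarith [inv_pos.2 (sub_pos.2 hx.2)]
        · linarith [inv_pos.2 hx.1]

theorem exp_two_pi_mul_I_ne_one {x : ℝ} (hx : x ∈ Ioo (0 : ℝ) 1) :
    Complex.exp (((2 * π * x : ℝ) : ℂ) * Complex.I) ≠ 1 := by
  intro h
  have := four_mul_min_le_norm_one_sub_exp (Ioo_subset_Icc_self hx)
  rw [h, sub_self, norm_zero] at this
  linarith [lt_min hx.1 (sub_pos.2 hx.2)]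

theorem exists_nat_mem_Ioc_inv {x : ℝ} (h0 : 0 < x) (h1 : x ≤ 1) :
    ∃ n : ℕ, x ∈ Ioc ((n + 2 : ℝ)⁻¹) ((n + 1 : ℝ)⁻¹) := by
  obtain ⟨n, hn⟩ := Nat.exists_eq_add_of_le'
    (Nat.le_floor (by simpa using one_le_inv₀ h0 |>.2 h1) : 1 ≤ ⌊x⁻¹⌋₊)
  have hlo : (n + 1 : ℝ) ≤ x⁻¹ := by exact_mod_cast hn ▸ Nat.floor_le (inv_nonneg.2 h0.le)
  have hhi : x⁻¹ < n + 2 := by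
    have := Nat.lt_floor_add_one x⁻¹
    rw [hn] at this; push_cast at this; linarith
  exact ⟨n, (inv_lt_comm₀ (by positivity) h0).2 hhi, (le_inv_comm₀ h0 (by positivity)).2 hlo⟩

theorem exists_nat_mem_Ico_inv {x : ℝ} (h0 : 0 < x) (h1 : x < 1) :
    ∃ n : ℕ, x ∈ Ico ((n + 2 : ℝ)⁻¹) ((n + 1 : ℝ)⁻¹) := by
  obtain ⟨n, hn⟩ := Nat.exists_eq_add_of_le'
    (Nat.lt_ceil.2 (by simpa using one_lt_inv₀ h0 |>.2 h1) : 1 < ⌈x⁻¹⌉₊)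
  have hhi : x⁻¹ ≤ n + 2 := by exact_mod_cast hn ▸ Nat.le_ceil x⁻¹
  have hlo : (n + 1 : ℝ) < x⁻¹ := by
    have := Nat.ceil_lt_add_one (inv_nonneg.2 h0.le)
    rw [hn] at this; push_cast at this; linarith
  exact ⟨n, (inv_le_comm₀ (by positivity) h0).2 hhi, (lt_inv_comm₀ h0 (by positivity)).2 hlo⟩

theorem integrableOn_of_norm_le_of_subset_iUnion {α ι E : Type*} [MeasurableSpace α] [Countable ι]
    [NormedAddCommGroup E] {μ : Measure α} [IsFiniteMeasure μ] {f : α → E} {S : Set α}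
    {s : ι → Set α} {C : ι → ℝ} (hf : AEStronglyMeasurable f μ) (hs : ∀ i, MeasurableSet (s i))
    (hS : S ⊆ ⋃ i, s i) (hC : ∀ i, ∀ x ∈ s i, ‖f x‖ ≤ C i)
    (hsum : Summable fun i => C i * μ.real (s i)) : IntegrableOn f S μ := by
  refine (integrableOn_iUnion_of_summable_integral_norm (fun i => ?_) ?_).mono_set hS
  · exact Measure.integrableOn_of_bounded (measure_ne_top μ _) hf
      ((ae_restrict_iff' (hs i)).2 (Eventually.of_forall (hC i)))
  · refine hsum.of_nonneg_of_le (fun i => integral_nonneg fun _ => norm_nonneg _) fun i => ?_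
    calc ∫ x in s i, ‖f x‖ ∂μ ≤ ‖∫ x in s i, ‖f x‖ ∂μ‖ := le_norm_self _
      _ ≤ C i * μ.real (s i) :=
        norm_setIntegral_le_of_norm_le_const (measure_lt_top μ _) fun x hx => by
          simpa using hC i x hx

theorem summable_nat_add_two_mul_half_pow :
    Summable fun n : ℕ => ((n : ℝ) + 2) * (1 / 2) ^ (n + 1) := by
  have hr : ‖(1 / 2 : ℝ)‖ < 1 := by norm_num
  refine (((summable_pow_mul_geometric_of_norm_lt_one 1 hr).add
    ((summable_geometric_of_norm_lt_one hr).mul_left 2)).mul_left (1 / 2)).congr fun n => ?_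
  ring

section QuestionMark

variable {Q : ℝ → ℝ}

theorem questionMark_inv_nat_add_one (hQ1 : Q 1 = 1)
    (hQfun : ∀ x ∈ Icc (0 : ℝ) 1, Q x = 2 * Q (x / (x + 1))) (n : ℕ) :
    Q (n + 1 : ℝ)⁻¹ = (1 / 2) ^ n := by
  induction n with
  | zero => simpa using hQ1
  | succ n ih =>
    have hmem : (n + 1 : ℝ)⁻¹ ∈ Icc (0 : ℝ) 1 :=
      ⟨by positivity, inv_le_one_of_one_le₀ (by simp)⟩
    have hstep : (n + 1 : ℝ)⁻¹ / ((n + 1 : ℝ)⁻¹ + 1) = ((n + 1 : ℕ) + 1 : ℝ)⁻¹ := by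
      push_cast
      field_simp
      ring
    have := hQfun _ hmem
    rw [hstep, ih] at this
    rw [pow_succ]
    linarith

theorem questionMark_one_sub_inv_nat_add_one (hQ1 : Q 1 = 1)
    (hQsymm : ∀ x ∈ Icc (0 : ℝ) 1, Q x = 1 - Q (1 - x))
    (hQfun : ∀ x ∈ Icc (0 : ℝ) 1, Q x = 2 * Q (x / (x + 1))) (n : ℕ) :
    Q (1 - (n + 1 : ℝ)⁻¹) = 1 - (1 / 2) ^ n := by
  have h : (n + 1 : ℝ)⁻¹ ≤ 1 := inv_le_one_of_one_le₀ (by simp)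
  rw [hQsymm _ ⟨by linarith, by linarith [inv_nonneg.2 (n.cast_add_one_pos (α := ℝ)).le]⟩,
    sub_sub_cancel, questionMark_inv_nat_add_one hQ1 hQfun]

variable {μ : Measure ℝ}

theorem measureReal_Ioc_inv_nat (hQ1 : Q 1 = 1)
    (hQfun : ∀ x ∈ Icc (0 : ℝ) 1, Q x = 2 * Q (x / (x + 1)))
    (hμ : ∀ a b : ℝ, 0 ≤ a → a ≤ b → b ≤ 1 → μ (Ioc a b) = ENNReal.ofReal (Q b - Q a))
    (n : ℕ) : μ.real (Ioc (n + 2 : ℝ)⁻¹ (n + 1 : ℝ)⁻¹) = (1 / 2) ^ (n + 1) := by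
  have h2 := questionMark_inv_nat_add_one hQ1 hQfun (n + 1)
  push_cast at h2
  rw [show (n : ℝ) + 1 + 1 = n + 2 by ring] at h2
  rw [measureReal_def, hμ _ _ (by positivity) (by gcongr; linarith)
    (inv_le_one_of_one_le₀ (by simp)), h2,
    questionMark_inv_nat_add_one hQ1 hQfun, show (1 / 2 : ℝ) ^ n - (1 / 2) ^ (n + 1) =
      (1 / 2) ^ (n + 1) by ring, ENNReal.toReal_ofReal (by positivity)]

theorem measureReal_Ioc_one_sub_inv_nat (hQ1 : Q 1 = 1)
    (hQsymm : ∀ x ∈ Icc (0 : ℝ) 1, Q x = 1 - Q (1 - x))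
    (hQfun : ∀ x ∈ Icc (0 : ℝ) 1, Q x = 2 * Q (x / (x + 1)))
    (hμ : ∀ a b : ℝ, 0 ≤ a → a ≤ b → b ≤ 1 → μ (Ioc a b) = ENNReal.ofReal (Q b - Q a))
    (n : ℕ) : μ.real (Ioc (1 - (n + 1 : ℝ)⁻¹) (1 - (n + 2 : ℝ)⁻¹)) = (1 / 2) ^ (n + 1) := by
  have h2 := questionMark_one_sub_inv_nat_add_one hQ1 hQsymm hQfun (n + 1)
  push_cast at h2
  rw [show (n : ℝ) + 1 + 1 = n + 2 by ring] at h2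
  have h1 : (n + 1 : ℝ)⁻¹ ≤ 1 := inv_le_one_of_one_le₀ (by simp)
  rw [measureReal_def, hμ _ _ (by linarith) (by gcongr; linarith)
    (by linarith [inv_nonneg.2 (by positivity : (0 : ℝ) ≤ n + 2)]), h2,
    questionMark_one_sub_inv_nat_add_one hQ1 hQsymm hQfun, show (1 - (1 / 2 : ℝ) ^ (n + 1)) -
      (1 - (1 / 2) ^ n) = (1 / 2) ^ (n + 1) by ring, ENNReal.toReal_ofReal (by positivity)]

theorem ae_mem_Ioo_zero_one [IsProbabilityMeasure μ] (hQ0 : Q 0 = 0) (hQ1 : Q 1 = 1)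
    (hQsymm : ∀ x ∈ Icc (0 : ℝ) 1, Q x = 1 - Q (1 - x))
    (hQfun : ∀ x ∈ Icc (0 : ℝ) 1, Q x = 2 * Q (x / (x + 1)))
    (hμ : ∀ a b : ℝ, 0 ≤ a → a ≤ b → b ≤ 1 → μ (Ioc a b) = ENNReal.ofReal (Q b - Q a)) :
    ∀ᵐ x ∂μ, x ∈ Ioo (0 : ℝ) 1 := by
  have hIoc : ∀ᵐ x ∂μ, x ∈ Ioc (0 : ℝ) 1 := by
    refine mem_ae_iff.2 ((prob_compl_eq_zero_iff measurableSet_Ioc).2 ?_)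
    rw [hμ 0 1 le_rfl zero_le_one le_rfl, hQ1, hQ0, sub_zero, ENNReal.ofReal_one]
  have hone : μ {1} = 0 := by
    have hlim : Tendsto (fun n : ℕ => ENNReal.ofReal ((1 / 2 : ℝ) ^ n)) atTop (nhds 0) := by
      simpa using ENNReal.tendsto_ofReal
        (tendsto_pow_atTop_nhds_zero_of_lt_one (by norm_num : (0 : ℝ) ≤ 1 / 2) (by norm_num))
    refine nonpos_iff_eq_zero.1 (ge_of_tendsto' hlim fun n => ?_)
    have h1 : (n + 1 : ℝ)⁻¹ ≤ 1 := inv_le_one_of_one_le₀ (by simp)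
    have h0 : 0 < (n + 1 : ℝ)⁻¹ := by positivity
    calc μ {1} ≤ μ (Ioc (1 - (n + 1 : ℝ)⁻¹) 1) := measure_mono (by simpa using h0)
      _ = ENNReal.ofReal ((1 / 2) ^ n) := by
        rw [hμ _ _ (by linarith) (by linarith) le_rfl, hQ1,
          questionMark_one_sub_inv_nat_add_one hQ1 hQsymm hQfun, sub_sub_cancel]
  filter_upwards [hIoc, measure_eq_zero_iff_ae_notMem.1 hone] with x hx hx1
  exact ⟨hx.1, lt_of_le_of_ne hx.2 hx1⟩

theorem integrableOn_inv_Ioo_zero_one [IsFiniteMeasure μ] (hQ1 : Q 1 = 1)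
    (hQfun : ∀ x ∈ Icc (0 : ℝ) 1, Q x = 2 * Q (x / (x + 1)))
    (hμ : ∀ a b : ℝ, 0 ≤ a → a ≤ b → b ≤ 1 → μ (Ioc a b) = ENNReal.ofReal (Q b - Q a)) :
    IntegrableOn (fun x : ℝ => x⁻¹) (Ioo 0 1) μ := by
  refine integrableOn_of_norm_le_of_subset_iUnion
    (s := fun n : ℕ => Ioc (n + 2 : ℝ)⁻¹ (n + 1 : ℝ)⁻¹) (C := fun n => n + 2)
    measurable_inv.aestronglyMeasurable (fun _ => measurableSet_Ioc)
    (fun x hx => mem_iUnion.2 (exists_nat_mem_Ioc_inv hx.1 hx.2.le)) (fun n x hx => ?_) ?_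
  · rw [norm_inv, norm_of_nonneg (lt_trans (by positivity) hx.1).le]
    exact (inv_lt_of_inv_lt₀ (by positivity) hx.1).le
  · simpa only [measureReal_Ioc_inv_nat hQ1 hQfun hμ] using summable_nat_add_two_mul_half_pow

theorem integrableOn_one_sub_inv_Ioo_zero_one [IsFiniteMeasure μ] (hQ1 : Q 1 = 1)
    (hQsymm : ∀ x ∈ Icc (0 : ℝ) 1, Q x = 1 - Q (1 - x))
    (hQfun : ∀ x ∈ Icc (0 : ℝ) 1, Q x = 2 * Q (x / (x + 1)))
    (hμ : ∀ a b : ℝ, 0 ≤ a → a ≤ b → b ≤ 1 → μ (Ioc a b) = ENNReal.ofReal (Q b - Q a)) :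
    IntegrableOn (fun x : ℝ => (1 - x)⁻¹) (Ioo 0 1) μ := by
  refine integrableOn_of_norm_le_of_subset_iUnion
    (s := fun n : ℕ => Ioc (1 - (n + 1 : ℝ)⁻¹) (1 - (n + 2 : ℝ)⁻¹)) (C := fun n => n + 2)
    (by fun_prop) (fun _ => measurableSet_Ioc) (fun x hx => ?_) (fun n x hx => ?_) ?_
  · obtain ⟨n, hn⟩ := exists_nat_mem_Ico_inv (sub_pos.2 hx.2) (by linarith [hx.1])
    exact mem_iUnion.2 ⟨n, by linarith [hn.2], by linarith [hn.1]⟩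
  · have h : (n + 2 : ℝ)⁻¹ ≤ 1 - x := by linarith [hx.2]
    rw [norm_inv, norm_of_nonneg (le_trans (by positivity) h)]
    exact inv_le_of_inv_le₀ (by positivity) h
  · simpa only [measureReal_Ioc_one_sub_inv_nat hQ1 hQsymm hQfun hμ]
      using summable_nat_add_two_mul_half_pow

theorem integrableOn_inv_norm_one_sub_exp [IsFiniteMeasure μ] (hQ1 : Q 1 = 1)
    (hQsymm : ∀ x ∈ Icc (0 : ℝ) 1, Q x = 1 - Q (1 - x))
    (hQfun : ∀ x ∈ Icc (0 : ℝ) 1, Q x = 2 * Q (x / (x + 1)))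
    (hμ : ∀ a b : ℝ, 0 ≤ a → a ≤ b → b ≤ 1 → μ (Ioc a b) = ENNReal.ofReal (Q b - Q a)) :
    IntegrableOn (fun x : ℝ => ‖1 - Complex.exp (((2 * π * x : ℝ) : ℂ) * Complex.I)‖⁻¹)
      (Ioo 0 1) μ := by
  refine Integrable.mono' ((integrableOn_inv_Ioo_zero_one hQ1 hQfun hμ).add
    (integrableOn_one_sub_inv_Ioo_zero_one hQ1 hQsymm hQfun hμ)) (by fun_prop) ?_
  filter_upwards [ae_restrict_mem measurableSet_Ioo] with x hx
  rw [norm_inv, norm_norm]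
  exact inv_norm_one_sub_exp_le hx

end QuestionMark

theorem stmt_1_general
    (Q : ℝ → ℝ) (μ : Measure ℝ) [IsProbabilityMeasure μ]
    (hQ0 : Q 0 = 0) (hQ1 : Q 1 = 1)
    (hQsymm : ∀ x ∈ Icc (0:ℝ) 1, Q x = 1 - Q (1 - x))
    (hQfun : ∀ x ∈ Icc (0:ℝ) 1, Q x = 2 * Q (x / (x + 1)))
    (hμ : ∀ a b : ℝ, 0 ≤ a → a ≤ b → b ≤ 1 →
      μ (Ioc a b) = ENNReal.ofReal (Q b - Q a))
    (d : ℕ → ℝ)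
    (hd : ∀ n : ℕ, d n = ∫ x in Icc (0:ℝ) 1, Real.cos (2 * π * n * x) ∂μ)
:
    IntegrableOn (fun x : ℝ => ‖1 - Complex.exp (((2 * π * x : ℝ) : ℂ) * Complex.I)‖⁻¹)
      (Icc 0 1) μ ∧
    ∀ N : ℕ, 1 ≤ N →
      |∑ n ∈ Finset.Icc 1 N, d n| ≤
        ∫ x in Icc (0:ℝ) 1, 2 * ‖1 - Complex.exp (((2 * π * x : ℝ) : ℂ) * Complex.I)‖⁻¹ ∂μ := by
  -- At `x = 0, 1` the bound reads `N ≤ 2 * 0⁻¹ = 0`, so it can only hold `μ`-a.e.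
  have hae := ae_mem_Ioo_zero_one hQ0 hQ1 hQsymm hQfun hμ
  have hint : Integrable
      (fun x : ℝ => ‖1 - Complex.exp (((2 * π * x : ℝ) : ℂ) * Complex.I)‖⁻¹) μ := by
    rw [← Measure.restrict_eq_self_of_ae_mem hae]
    exact integrableOn_inv_norm_one_sub_exp hQ1 hQsymm hQfun hμ
  refine ⟨hint.integrableOn, fun N _ => ?_⟩
  have hcos (n : ℕ) : Integrable (fun x : ℝ => cos (2 * π * n * x)) (μ.restrict (Icc 0 1)) :=
    (integrable_const 1).mono' (by fun_prop) (Eventually.of_forall fun x => abs_cos_le_one _)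
  rw [Finset.sum_congr rfl fun n _ => hd n, ← integral_finsetSum _ fun n _ => hcos n,
    ← Real.norm_eq_abs]
  refine norm_integral_le_of_norm_le (hint.integrableOn.const_mul 2) (ae_restrict_of_ae ?_)
  filter_upwards [hae] with x hx
  have harg (n : ℕ) : 2 * π * n * x = n * (2 * π * x) := by ring
  simpa only [harg, Real.norm_eq_abs] using abs_sum_cos_nat_mul_le (exp_two_pi_mul_I_ne_one hx) N

theorem stmt_1
    (Q : ℝ → ℝ) (μ : Measure ℝ) [IsProbabilityMeasure μ]
    (hQcont : ContinuousOn Q (Icc 0 1))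
    (hQmono : StrictMonoOn Q (Icc 0 1))
    (hQ0 : Q 0 = 0) (hQ1 : Q 1 = 1)
    (hQsymm : ∀ x ∈ Icc (0:ℝ) 1, Q x = 1 - Q (1 - x))
    (hQfun : ∀ x ∈ Icc (0:ℝ) 1, Q x = 2 * Q (x / (x + 1)))
    (hμ : ∀ a b : ℝ, 0 ≤ a → a ≤ b → b ≤ 1 →
      μ (Ioc a b) = ENNReal.ofReal (Q b - Q a))
    (hμsupp : μ (Icc (0:ℝ) 1)ᶜ = 0)
    (d : ℕ → ℝ)
    (hd : ∀ n : ℕ, d n = ∫ x in Icc (0:ℝ) 1, Real.cos (2 * π * n * x) ∂μ)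
:
    IntegrableOn (fun x : ℝ => ‖1 - Complex.exp (((2 * π * x : ℝ) : ℂ) * Complex.I)‖⁻¹)
      (Icc 0 1) μ ∧
    ∀ N : ℕ, 1 ≤ N →
      |∑ n ∈ Finset.Icc 1 N, d n| ≤
        ∫ x in Icc (0:ℝ) 1, 2 * ‖1 - Complex.exp (((2 * π * x : ℝ) : ℂ) * Complex.I)‖⁻¹ ∂μ :=
  stmt_1_general Q μ hQ0 hQ1 hQsymm hQfun hμ d hd
end

section
/- For every s ∈ ℂ with Re(s) > 0, the Dirichlet series Σ_{n=1}^{∞} d_n · n^{−s} converges, i.e., the partial sums Σ_{n=1}^{N} d_n · n^{−s} have a limit as N → ∞. -/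
/-!
Writing `Σ_{n ≤ N} d_n = ∫ Σ_{n ≤ N} cos(2πnx) dμ(x)`, the cosine sum is bounded by
`1 / sin(πx) ≤ 1/x + 1/(1-x)`, and `1/x` is `μ`-integrable on `(0,1)` because the functional
equation forces `Q(1/(k+1)) = 2^{-k}`, so the layer `(1/(k+2), 1/(k+1)]`, where `1/x < k+2`,
has mass at most `2^{-k}`; the symmetry `Q(x) = 1 - Q(1-x)` transfers this to `1/(1-x)`.
Hence the partial sums of `d_n` are bounded, and since `n^{-s}` tends to `0` with summable
increments when `Re s > 0`, Abel summation (Dirichlet's test) gives convergence.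
-/

open MeasureTheory Real Set Filter Topology

section DirichletTest

variable {𝕜 E : Type*} [NormedField 𝕜] [NormedAddCommGroup E] [NormedSpace 𝕜 E]

theorem cauchySeq_series_smul_of_tendsto_zero_of_summable_norm_sub {f : ℕ → 𝕜} {z : ℕ → E}
    {b : ℝ} (hf0 : Tendsto f atTop (𝓝 0)) (hfv : Summable fun n ↦ ‖f (n + 1) - f n‖)
    (hzb : ∀ n, ‖∑ i ∈ Finset.range n, z i‖ ≤ b) :
    CauchySeq fun n ↦ ∑ i ∈ Finset.range n, f i • z i := by
  rw [← cauchySeq_shift 1]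
  simp_rw [Finset.sum_range_by_parts _ _ (Nat.succ _), Nat.succ_sub_succ_eq_sub, tsub_zero,
    sub_eq_add_neg]
  refine (NormedField.tendsto_zero_smul_of_tendsto_zero_of_bounded hf0
    ⟨b, eventually_map.mpr <| Eventually.of_forall fun n ↦ hzb (n + 1)⟩).cauchySeq.add
    (CauchySeq.neg ?_)
  refine cauchySeq_range_of_norm_bounded (g := fun n ↦ b * ‖f (n + 1) - f n‖)
    (hfv.mul_left b).hasSum.tendsto_sum_nat.cauchySeq fun n ↦ ?_
  rw [norm_smul, mul_comm, ← sub_eq_add_neg]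
  exact mul_le_mul_of_nonneg_right (hzb _) (norm_nonneg _)

end DirichletTest

theorem norm_ofReal_cpow_sub_le {s : ℂ} (hs : s.re ≤ 1) {a b : ℝ} (ha : 0 < a) (hab : a ≤ b) :
    ‖(b : ℂ) ^ s - (a : ℂ) ^ s‖ ≤ ‖s‖ * a ^ (s.re - 1) * (b - a) := by
  have hderiv : ∀ t ∈ Icc a b, HasDerivWithinAt (fun t : ℝ ↦ (t : ℂ) ^ s)
      (s * (t : ℂ) ^ (s - 1)) (Icc a b) t := fun t ht ↦
    ((Complex.hasStrictDerivAt_cpow_const (c := s) (Complex.ofReal_mem_slitPlane.2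
      (ha.trans_le ht.1))).hasDerivAt.comp_ofReal).hasDerivWithinAt
  have hbound : ∀ t ∈ Icc a b, ‖s * (t : ℂ) ^ (s - 1)‖ ≤ ‖s‖ * a ^ (s.re - 1) := by
    intro t ht
    rw [norm_mul, Complex.norm_cpow_eq_rpow_re_of_pos (ha.trans_le ht.1), Complex.sub_re,
      Complex.one_re]
    exact mul_le_mul_of_nonneg_left (Real.rpow_le_rpow_of_nonpos ha ht.1 (by linarith))
      (norm_nonneg s)
  simpa [Real.norm_eq_abs, abs_of_nonneg (sub_nonneg.2 hab)] using
    (convex_Icc a b).norm_image_sub_le_of_norm_hasDerivWithin_le hderiv hbound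
      (left_mem_Icc.2 hab) (right_mem_Icc.2 hab)

theorem summable_norm_natCast_cpow_succ_sub {s : ℂ} (hs : 0 < s.re) :
    Summable fun n : ℕ ↦ ‖((n + 1 + 1 : ℕ) : ℂ) ^ (-s) - ((n + 1 : ℕ) : ℂ) ^ (-s)‖ := by
  have hp : Summable fun n : ℕ ↦ ‖s‖ * ((n + 1 : ℕ) : ℝ) ^ (-s.re - 1) := by
    refine (((summable_nat_add_iff 1).2 (Real.summable_nat_rpow_inv.2
      (by linarith : 1 < s.re + 1))).congr fun n ↦ ?_).mul_left ‖s‖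
    rw [← Real.rpow_neg (by positivity)]
    push_cast
    ring_nf
  refine hp.of_nonneg_of_le (fun _ ↦ norm_nonneg _) fun n ↦ ?_
  have := norm_ofReal_cpow_sub_le (s := -s) (by rw [Complex.neg_re]; linarith) (a := (n + 1 : ℕ))
    (b := (n + 1 + 1 : ℕ)) (by positivity) (by push_cast; linarith)
  push_cast at this ⊢
  simpa using this

theorem sum_Icc_one_eq_sum_range {M : Type*} [AddCommMonoid M] (f : ℕ → M) (N : ℕ) :
    ∑ n ∈ Finset.Icc 1 N, f n = ∑ i ∈ Finset.range N, f (i + 1) := by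
  induction N with
  | zero => simp
  | succ N ih => rw [Finset.sum_Icc_succ_top (by omega), ih, Finset.sum_range_succ]

theorem exists_tendsto_sum_mul_cpow_of_bounded {a : ℕ → ℂ} {C : ℝ}
    (ha : ∀ N, ‖∑ n ∈ Finset.Icc 1 N, a n‖ ≤ C) {s : ℂ} (hs : 0 < s.re) :
    ∃ L, Tendsto (fun N ↦ ∑ n ∈ Finset.Icc 1 N, a n * (n : ℂ) ^ (-s)) atTop (𝓝 L) := by
  have hf0 : Tendsto (fun n : ℕ ↦ ((n + 1 : ℕ) : ℂ) ^ (-s)) atTop (𝓝 0) := by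
    refine tendsto_zero_iff_norm_tendsto_zero.2 ?_
    simp_rw [Complex.norm_natCast_cpow_of_pos (Nat.succ_pos _), Complex.neg_re]
    exact (tendsto_rpow_neg_atTop hs).comp
      (tendsto_natCast_atTop_atTop.comp (tendsto_add_atTop_nat 1))
  have h := cauchySeq_series_smul_of_tendsto_zero_of_summable_norm_sub hf0
    (summable_norm_natCast_cpow_succ_sub hs) (z := fun i ↦ a (i + 1))
    (fun N ↦ (sum_Icc_one_eq_sum_range a N).symm ▸ ha N)
  obtain ⟨L, hL⟩ := cauchySeq_tendsto_of_complete h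
  refine ⟨L, hL.congr fun N ↦ ?_⟩
  simp [sum_Icc_one_eq_sum_range, mul_comm]

theorem two_mul_sin_mul_sum_cos_two_mul (y : ℝ) (N : ℕ) :
    2 * sin y * ∑ n ∈ Finset.Icc 1 N, cos (2 * n * y) = sin ((2 * N + 1) * y) - sin y := by
  induction N with
  | zero => simp
  | succ N ih =>
    rw [Finset.sum_Icc_succ_top (by omega), mul_add, ih, two_mul_sin_mul_cos,
      show y - 2 * ((N + 1 : ℕ) : ℝ) * y = -((2 * N + 1) * y) by push_cast; ring, sin_neg]
    push_cast
    ring_nf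

theorem abs_sum_cos_two_mul_le_inv_sin {y : ℝ} (hy : 0 < sin y) (N : ℕ) :
    |∑ n ∈ Finset.Icc 1 N, cos (2 * n * y)| ≤ (sin y)⁻¹ := by
  have h2 : 0 < 2 * sin y := by positivity
  rw [← mul_le_mul_iff_of_pos_left h2, mul_inv_cancel_right₀ hy.ne', ← abs_of_pos h2, ← abs_mul,
    two_mul_sin_mul_sum_cos_two_mul]
  calc |sin ((2 * N + 1) * y) - sin y| ≤ |sin ((2 * N + 1) * y)| + |sin y| := abs_sub _ _
    _ ≤ 2 := by linarith [abs_sin_le_one ((2 * N + 1) * y), abs_sin_le_one y]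

theorem mul_one_sub_le_sin_pi_mul {x : ℝ} (hx : x ∈ Icc 0 1) : x * (1 - x) ≤ sin (π * x) := by
  wlog h : x ≤ 1 / 2 generalizing x
  · have := this (x := 1 - x) ⟨by linarith [hx.2], by linarith [hx.1]⟩ (by linarith)
    rwa [show π * (1 - x) = π - π * x by ring, sin_pi_sub, sub_sub_cancel, mul_comm] at this
  calc x * (1 - x) ≤ 2 / π * (π * x) := by
        rw [← mul_assoc, div_mul_cancel₀ _ pi_ne_zero]; nlinarith [hx.1]
    _ ≤ sin (π * x) := mul_le_sin (by nlinarith [hx.1, pi_pos]) (by nlinarith [pi_pos])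

theorem abs_sum_cos_two_pi_mul_le {x : ℝ} (hx : x ∈ Ioo 0 1) (N : ℕ) :
    |∑ n ∈ Finset.Icc 1 N, cos (2 * π * n * x)| ≤ x⁻¹ + (1 - x)⁻¹ := by
  have hpos : 0 < x * (1 - x) := mul_pos hx.1 (sub_pos.2 hx.2)
  have hsin := mul_one_sub_le_sin_pi_mul (Ioo_subset_Icc_self hx)
  calc |∑ n ∈ Finset.Icc 1 N, cos (2 * π * n * x)|
      = |∑ n ∈ Finset.Icc 1 N, cos (2 * n * (π * x))| := by simp only [mul_assoc, mul_left_comm]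
    _ ≤ (sin (π * x))⁻¹ := abs_sum_cos_two_mul_le_inv_sin (hpos.trans_le hsin) N
    _ ≤ (x * (1 - x))⁻¹ := inv_anti₀ hpos hsin
    _ = x⁻¹ + (1 - x)⁻¹ := by rw [inv_add_inv hx.1.ne' (sub_pos.2 hx.2).ne']; ring

theorem lintegral_Ioo_inv_le_tsum (ν : Measure ℝ) :
    ∫⁻ x in Ioo 0 1, ENNReal.ofReal x⁻¹ ∂ν ≤
      ∑' k : ℕ, ENNReal.ofReal (k + 2) * ν (Ioc ((k : ℝ) + 2)⁻¹ ((k : ℝ) + 1)⁻¹) := by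
  set F : ℕ → ℝ → ENNReal := fun k ↦
    (Ioc ((k : ℝ) + 2)⁻¹ ((k : ℝ) + 1)⁻¹).indicator fun _ ↦ ENNReal.ofReal (k + 2)
  have hF : ∀ k, Measurable (F k) := fun k ↦ measurable_const.indicator measurableSet_Ioc
  have hcover : ∀ x ∈ Ioo (0 : ℝ) 1, ENNReal.ofReal x⁻¹ ≤ ∑' k, F k x := by
    intro x hx
    have h1 : 0 ≤ x⁻¹ - 1 := by rw [sub_nonneg, one_le_inv₀ hx.1]; exact hx.2.le
    set k := ⌊x⁻¹ - 1⌋₊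
    have hk₁ : (k : ℝ) + 1 ≤ x⁻¹ := by linarith [Nat.floor_le h1]
    have hk₂ : x⁻¹ < k + 2 := by linarith [Nat.lt_floor_add_one (x⁻¹ - 1)]
    have hxk : x ∈ Ioc ((k : ℝ) + 2)⁻¹ ((k : ℝ) + 1)⁻¹ :=
      ⟨(inv_lt_comm₀ (by positivity) hx.1).2 hk₂, (le_inv_comm₀ hx.1 (by positivity)).2 hk₁⟩
    refine le_trans ?_ (ENNReal.le_tsum k)
    simp only [F, indicator_of_mem hxk]
    exact ENNReal.ofReal_le_ofReal hk₂.le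
  calc ∫⁻ x in Ioo 0 1, ENNReal.ofReal x⁻¹ ∂ν
      ≤ ∫⁻ x in Ioo 0 1, ∑' k, F k x ∂ν := setLIntegral_mono (Measurable.tsum hF) hcover
    _ ≤ ∫⁻ x, ∑' k, F k x ∂ν := setLIntegral_le_lintegral _ _
    _ = ∑' k, ∫⁻ x, F k x ∂ν := lintegral_tsum fun k ↦ (hF k).aemeasurable
    _ = _ := by simp only [F, lintegral_indicator_const measurableSet_Ioc]

theorem lintegral_Ioo_inv_ne_top {ν : Measure ℝ} {r : ℝ} (hr₀ : 0 ≤ r) (hr : r < 1)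
    (hν : ∀ k : ℕ, ν (Ioc ((k : ℝ) + 2)⁻¹ ((k : ℝ) + 1)⁻¹) ≤ ENNReal.ofReal (r ^ k)) :
    ∫⁻ x in Ioo 0 1, ENNReal.ofReal x⁻¹ ∂ν ≠ ⊤ := by
  have hsum : Summable fun k : ℕ ↦ ((k : ℝ) + 2) * r ^ k := by
    have hr' : ‖r‖ < 1 := by rwa [norm_of_nonneg hr₀]
    simpa [add_mul] using (summable_pow_mul_geometric_of_norm_lt_one 1 hr').add
      ((summable_geometric_of_lt_one hr₀ hr).mul_left 2)
  refine (calc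
    ∫⁻ x in Ioo 0 1, ENNReal.ofReal x⁻¹ ∂ν
      ≤ ∑' k : ℕ, ENNReal.ofReal (k + 2) * ENNReal.ofReal (r ^ k) :=
        (lintegral_Ioo_inv_le_tsum ν).trans (ENNReal.tsum_le_tsum fun k ↦ by gcongr; exact hν k)
    _ = ENNReal.ofReal (∑' k : ℕ, ((k : ℝ) + 2) * r ^ k) := by
        rw [ENNReal.ofReal_tsum_of_nonneg (fun k ↦ by positivity) hsum]
        exact tsum_congr fun k ↦ (ENNReal.ofReal_mul (by positivity)).symm
    _ < ⊤ := ENNReal.ofReal_lt_top).ne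

theorem setLIntegral_Ioo_inv_one_sub (ν : Measure ℝ) :
    ∫⁻ x in Ioo 0 1, ENNReal.ofReal (1 - x)⁻¹ ∂ν =
      ∫⁻ x in Ioo 0 1, ENNReal.ofReal x⁻¹ ∂ν.map (1 - ·) := by
  rw [setLIntegral_map measurableSet_Ioo (by fun_prop) (by fun_prop)]
  simp

theorem exists_bound_sum_integral_cos {ν : Measure ℝ} [IsFiniteMeasure ν] [NullSingletonClass ν]
    (h₀ : ∫⁻ x in Ioo 0 1, ENNReal.ofReal x⁻¹ ∂ν ≠ ⊤)
    (h₁ : ∫⁻ x in Ioo 0 1, ENNReal.ofReal (1 - x)⁻¹ ∂ν ≠ ⊤) :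
    ∃ C, ∀ N : ℕ, |∑ n ∈ Finset.Icc 1 N, ∫ x in Icc 0 1, cos (2 * π * n * x) ∂ν| ≤ C := by
  refine ⟨(∫⁻ x in Ioo 0 1, ENNReal.ofReal x⁻¹ ∂ν +
    ∫⁻ x in Ioo 0 1, ENNReal.ofReal (1 - x)⁻¹ ∂ν).toReal, fun N ↦ ?_⟩
  rw [← integral_finsetSum _ fun n _ ↦ (by fun_prop : Continuous _).integrableOn_Icc,
    Measure.restrict_congr_set Ioo_ae_eq_Icc.symm, ← Real.norm_eq_abs]
  refine (norm_integral_le_lintegral_norm _).trans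
    (ENNReal.toReal_mono (ENNReal.add_ne_top.2 ⟨h₀, h₁⟩) ?_)
  rw [← lintegral_add_left (by fun_prop)]
  refine setLIntegral_mono (by fun_prop) fun x hx ↦ ?_
  rw [← ENNReal.ofReal_add (inv_nonneg.2 hx.1.le) (inv_nonneg.2 (sub_pos.2 hx.2).le)]
  exact ENNReal.ofReal_le_ofReal (abs_sum_cos_two_pi_mul_le hx N)

section QuestionMark

variable {Q : ℝ → ℝ} {μ : Measure ℝ}

theorem apply_inv_natCast_add_one_eq (hQ1 : Q 1 = 1)
    (hQfun : ∀ x ∈ Icc (0 : ℝ) 1, Q x = 2 * Q (x / (x + 1))) (k : ℕ) :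
    Q ((k : ℝ) + 1)⁻¹ = 2⁻¹ ^ k := by
  induction k with
  | zero => simpa using hQ1
  | succ k ih =>
    have hk : ((k : ℝ) + 1)⁻¹ ∈ Icc (0 : ℝ) 1 :=
      ⟨by positivity, inv_le_one_of_one_le₀ (by linarith [k.cast_nonneg (α := ℝ)])⟩
    have hstep := hQfun _ hk
    rw [ih, show ((k : ℝ) + 1)⁻¹ / (((k : ℝ) + 1)⁻¹ + 1) = ((k + 1 : ℕ) + 1 : ℝ)⁻¹ by
      push_cast; field_simp; ring] at hstep
    rw [pow_succ]
    linarith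

theorem measure_Ioc_inv_natCast_le (hQ0 : Q 0 = 0) (hQ1 : Q 1 = 1)
    (hQfun : ∀ x ∈ Icc (0 : ℝ) 1, Q x = 2 * Q (x / (x + 1)))
    (hμ : ∀ a b : ℝ, 0 ≤ a → a ≤ b → b ≤ 1 → μ (Ioc a b) = ENNReal.ofReal (Q b - Q a))
    (k : ℕ) : μ (Ioc ((k : ℝ) + 2)⁻¹ ((k : ℝ) + 1)⁻¹) ≤ ENNReal.ofReal (2⁻¹ ^ k) := by
  calc μ (Ioc ((k : ℝ) + 2)⁻¹ ((k : ℝ) + 1)⁻¹)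
      ≤ μ (Ioc 0 ((k : ℝ) + 1)⁻¹) := measure_mono (Ioc_subset_Ioc_left (by positivity))
    _ = ENNReal.ofReal (2⁻¹ ^ k) := by
      have hk : ((k : ℝ) + 1)⁻¹ ≤ 1 := inv_le_one_of_one_le₀ (by linarith [k.cast_nonneg (α := ℝ)])
      rw [hμ _ _ le_rfl (by positivity) hk, apply_inv_natCast_add_one_eq hQ1 hQfun, hQ0, sub_zero]

theorem nullSingletonClass_of_measure_Ioc [IsProbabilityMeasure μ]
    (hQcont : ContinuousOn Q (Icc 0 1)) (hQ0 : Q 0 = 0) (hQ1 : Q 1 = 1)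
    (hμ : ∀ a b : ℝ, 0 ≤ a → a ≤ b → b ≤ 1 → μ (Ioc a b) = ENNReal.ofReal (Q b - Q a)) :
    NullSingletonClass μ := by
  refine ⟨fun p ↦ ?_⟩
  by_cases hp : p ∈ Ioc 0 1
  · have hQp : Tendsto Q (𝓝[<] p) (𝓝 (Q p)) :=
      ((hQcont p (Ioc_subset_Icc_self hp)).mono_of_mem_nhdsWithin
        (mem_of_superset (Ioo_mem_nhdsLT hp.1) (Ioo_subset_Icc_self.trans
          (Icc_subset_Icc le_rfl hp.2)))).tendsto
    have hle : ∀ᶠ a in 𝓝[<] p, μ {p} ≤ ENNReal.ofReal (Q p - Q a) := by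
      filter_upwards [Ioo_mem_nhdsLT hp.1] with a ha
      rw [← hμ a p ha.1.le ha.2.le hp.2]
      exact measure_mono (singleton_subset_iff.2 ⟨ha.2, le_rfl⟩)
    simpa using ge_of_tendsto (ENNReal.tendsto_ofReal (tendsto_const_nhds.sub hQp)) hle
  · refine measure_mono_null (singleton_subset_iff.2 (mem_compl hp)) ?_
    rw [prob_compl_eq_zero_iff measurableSet_Ioc, hμ 0 1 le_rfl zero_le_one le_rfl, hQ0, hQ1]
    simp

theorem map_one_sub_measure_Ioc [NullSingletonClass μ]
    (hQsymm : ∀ x ∈ Icc (0 : ℝ) 1, Q x = 1 - Q (1 - x))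
    (hμ : ∀ a b : ℝ, 0 ≤ a → a ≤ b → b ≤ 1 → μ (Ioc a b) = ENNReal.ofReal (Q b - Q a))
    (a b : ℝ) (ha : 0 ≤ a) (hab : a ≤ b) (hb : b ≤ 1) :
    μ.map (1 - ·) (Ioc a b) = ENNReal.ofReal (Q b - Q a) := by
  rw [Measure.map_apply (by fun_prop) measurableSet_Ioc, preimage_const_sub_Ioc,
    measure_congr Ico_ae_eq_Ioc, hμ _ _ (by linarith) (by linarith) (by linarith),
    hQsymm a ⟨ha, hab.trans hb⟩, hQsymm b ⟨ha.trans hab, hb⟩]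
  ring_nf

end QuestionMark

theorem stmt_2_general
    (Q : ℝ → ℝ) (μ : Measure ℝ) [IsProbabilityMeasure μ]
    (hQcont : ContinuousOn Q (Icc 0 1))
    (hQ0 : Q 0 = 0) (hQ1 : Q 1 = 1)
    (hQsymm : ∀ x ∈ Icc (0:ℝ) 1, Q x = 1 - Q (1 - x))
    (hQfun : ∀ x ∈ Icc (0:ℝ) 1, Q x = 2 * Q (x / (x + 1)))
    (hμ : ∀ a b : ℝ, 0 ≤ a → a ≤ b → b ≤ 1 →
      μ (Ioc a b) = ENNReal.ofReal (Q b - Q a))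
    (d : ℕ → ℝ)
    (hd : ∀ n : ℕ, d n = ∫ x in Icc (0:ℝ) 1, Real.cos (2 * π * n * x) ∂μ)
:
    ∀ s : ℂ, 0 < s.re →
      ∃ L : ℂ, Tendsto (fun N : ℕ => ∑ n ∈ Finset.Icc 1 N, (d n : ℂ) * (n : ℂ) ^ (-s))
        atTop (nhds L) := by
  intro s hs
  have := nullSingletonClass_of_measure_Ioc hQcont hQ0 hQ1 hμ
  have hμ' := map_one_sub_measure_Ioc hQsymm hμ
  obtain ⟨C, hC⟩ := exists_bound_sum_integral_cos
    (lintegral_Ioo_inv_ne_top (by norm_num) (by norm_num)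
      (measure_Ioc_inv_natCast_le hQ0 hQ1 hQfun hμ))
    (setLIntegral_Ioo_inv_one_sub μ ▸ lintegral_Ioo_inv_ne_top (by norm_num) (by norm_num)
      (measure_Ioc_inv_natCast_le hQ0 hQ1 hQfun hμ'))
  refine exists_tendsto_sum_mul_cpow_of_bounded (C := C) (fun N ↦ ?_) hs
  rw [← Complex.ofReal_sum, Complex.norm_real, Real.norm_eq_abs]
  simpa only [hd] using hC N

theorem stmt_2
    (Q : ℝ → ℝ) (μ : Measure ℝ) [IsProbabilityMeasure μ]
    (hQcont : ContinuousOn Q (Icc 0 1))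
    (hQmono : StrictMonoOn Q (Icc 0 1))
    (hQ0 : Q 0 = 0) (hQ1 : Q 1 = 1)
    (hQsymm : ∀ x ∈ Icc (0:ℝ) 1, Q x = 1 - Q (1 - x))
    (hQfun : ∀ x ∈ Icc (0:ℝ) 1, Q x = 2 * Q (x / (x + 1)))
    (hμ : ∀ a b : ℝ, 0 ≤ a → a ≤ b → b ≤ 1 →
      μ (Ioc a b) = ENNReal.ofReal (Q b - Q a))
    (hμsupp : μ (Icc (0:ℝ) 1)ᶜ = 0)
    (d : ℕ → ℝ)
    (hd : ∀ n : ℕ, d n = ∫ x in Icc (0:ℝ) 1, Real.cos (2 * π * n * x) ∂μ)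
:
    ∀ s : ℂ, 0 < s.re →
      ∃ L : ℂ, Tendsto (fun N : ℕ => ∑ n ∈ Finset.Icc 1 N, (d n : ℂ) * (n : ℂ) ^ (-s))
        atTop (nhds L) :=
  stmt_2_general Q μ hQcont hQ0 hQ1 hQsymm hQfun hμ d hd
end

section
/- For every integer v ≥ 1, the special value 𝔐(2v) := Σ_{n=1}^{∞} d_n · n^{−2v} (an absolutely convergent series) satisfies 𝔐(2v) / (2π)^{2v} = ((−1)^{v+1}/2) · Σ_{L=0}^{2v} B_{2v−L} · m_L / ((2v−L)! · L!), where B_k denotes the k-th Bernoulli number, defined by the expansion t/(e^t − 1) = Σ_{k=0}^{∞} B_k t^k / k!. -/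
open MeasureTheory Real Set Filter Asymptotics

/-! Integrate the Fourier expansion
`∑_{n ≥ 1} cos (2πnx) / n^(2v) = (-1)^(v+1) (2π)^(2v) / (2 (2v)!) · B_{2v}(x)` on `[0, 1]` termwise
against `μ` (the terms are dominated by the summable constants `n^(-2v)`), and expand
`B_{2v}(x) = ∑_L binom(2v, L) B_{2v-L} x^L` to turn `∫ B_{2v} dμ` into moments. -/

open Finset in
theorem bernoulliFun_eq_sum (n : ℕ) (x : ℝ) :
    bernoulliFun n x = ∑ L ∈ range (n + 1), (bernoulli (n - L) : ℝ) * n.choose L * x ^ L := by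
  simp [bernoulliFun, Polynomial.bernoulli_def]

open Nat in
theorem hasSum_cos_div_nat_succ_pow {k : ℕ} (hk : k ≠ 0) {x : ℝ} (hx : x ∈ Icc (0 : ℝ) 1) :
    HasSum (fun n : ℕ => cos (2 * π * (n + 1) * x) / ((n : ℝ) + 1) ^ (2 * k))
      ((-1 : ℝ) ^ (k + 1) * (2 * π) ^ (2 * k) / 2 / (2 * k)! * bernoulliFun (2 * k) x) := by
  have h := hasSum_one_div_nat_pow_mul_cos hk hx
  rw [← hasSum_nat_add_iff' 1] at h
  simpa [zero_pow (by omega : 2 * k ≠ 0), div_eq_inv_mul, bernoulliFun] using h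

open Finset in
theorem setIntegral_Icc_bernoulliFun (μ : Measure ℝ) [IsFiniteMeasure μ] (n : ℕ) :
    ∫ x in Icc (0 : ℝ) 1, bernoulliFun n x ∂μ =
      ∑ L ∈ range (n + 1),
        (bernoulli (n - L) : ℝ) * n.choose L * ∫ x in Icc (0 : ℝ) 1, x ^ L ∂μ := by
  simp_rw [bernoulliFun_eq_sum]
  rw [integral_finsetSum _ fun L _ => ((continuous_pow L).integrableOn_Icc (μ := μ)).const_mul _]
  simp_rw [integral_const_mul]

open Nat in
theorem hasSum_setIntegral_cos_div_nat_succ_pow (μ : Measure ℝ) [IsFiniteMeasure μ] {k : ℕ}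
    (hk : k ≠ 0) :
    HasSum
      (fun n : ℕ => (∫ x in Icc (0 : ℝ) 1, cos (2 * π * (n + 1) * x) ∂μ) / ((n : ℝ) + 1) ^ (2 * k))
      ((-1 : ℝ) ^ (k + 1) * (2 * π) ^ (2 * k) / 2 / (2 * k)! *
        ∫ x in Icc (0 : ℝ) 1, bernoulliFun (2 * k) x ∂μ) := by
  have hsum : Summable fun n : ℕ => 1 / ((n : ℝ) + 1) ^ (2 * k) := by
    exact_mod_cast (summable_nat_add_iff 1).mpr
      (Real.summable_one_div_nat_pow.mpr (by omega : 1 < 2 * k))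
  simp_rw [← integral_div, ← integral_const_mul]
  refine hasSum_integral_of_dominated_convergence (fun n _ => 1 / ((n : ℝ) + 1) ^ (2 * k))
    (fun n => (by fun_prop : Continuous _).aestronglyMeasurable) (fun n => ?_)
    (ae_of_all _ fun _ => hsum) (integrable_const _) ?_
  · refine ae_of_all _ fun x => ?_
    rw [norm_div, norm_of_nonneg (by positivity : (0 : ℝ) ≤ ((n : ℝ) + 1) ^ (2 * k))]
    gcongr
    exact abs_cos_le_one _
  · filter_upwards [ae_restrict_mem measurableSet_Icc] with x hx
    exact hasSum_cos_div_nat_succ_pow hk hx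

open Finset Nat in
theorem sum_bernoulli_mul_choose_div_factorial (n : ℕ) (a : ℕ → ℝ) :
    (∑ L ∈ range (n + 1), (bernoulli (n - L) : ℝ) * n.choose L * a L) / n ! =
      ∑ L ∈ range (n + 1), (bernoulli (n - L) : ℝ) * a L / ((n - L)! * L !) := by
  rw [sum_div]
  refine sum_congr rfl fun L hL => ?_
  rw [cast_choose ℝ (by simpa [Nat.lt_succ_iff] using hL)]
  field_simp

theorem stmt_5_general
    (μ : Measure ℝ) [IsProbabilityMeasure μ]
    (d : ℕ → ℝ)
    (hd : ∀ n : ℕ, d n = ∫ x in Icc (0:ℝ) 1, Real.cos (2 * π * n * x) ∂μ)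
    (m : ℕ → ℝ)
    (hm : ∀ L : ℕ, m L = ∫ x in Icc (0:ℝ) 1, x ^ L ∂μ)
:
    ∀ v : ℕ, 1 ≤ v →
      Summable (fun n : ℕ => d (n + 1) / ((n : ℝ) + 1) ^ (2 * v)) ∧
      (∑' n : ℕ, d (n + 1) / ((n : ℝ) + 1) ^ (2 * v)) / (2 * π) ^ (2 * v)
        = ((-1 : ℝ) ^ (v + 1) / 2) *
          ∑ L ∈ Finset.range (2 * v + 1),
            (bernoulli (2 * v - L) : ℝ) * m L / (((2 * v - L).factorial : ℝ) * (L.factorial : ℝ)) := by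
  intro v hv
  have hsum := hasSum_setIntegral_cos_div_nat_succ_pow μ (k := v) (by omega)
  have hd_succ (n : ℕ) : ∫ x in Icc (0 : ℝ) 1, cos (2 * π * (n + 1) * x) ∂μ = d (n + 1) := by
    rw [hd, Nat.cast_add_one]
  simp_rw [hd_succ] at hsum
  refine ⟨hsum.summable, ?_⟩
  rw [hsum.tsum_eq, setIntegral_Icc_bernoulliFun, ← sum_bernoulli_mul_choose_div_factorial]
  simp_rw [← hm]
  field_simp

theorem stmt_5
    (Q : ℝ → ℝ) (μ : Measure ℝ) [IsProbabilityMeasure μ]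
    (hQcont : ContinuousOn Q (Icc 0 1))
    (hQmono : StrictMonoOn Q (Icc 0 1))
    (hQ0 : Q 0 = 0) (hQ1 : Q 1 = 1)
    (hQsymm : ∀ x ∈ Icc (0:ℝ) 1, Q x = 1 - Q (1 - x))
    (hQfun : ∀ x ∈ Icc (0:ℝ) 1, Q x = 2 * Q (x / (x + 1)))
    (hμ : ∀ a b : ℝ, 0 ≤ a → a ≤ b → b ≤ 1 →
      μ (Ioc a b) = ENNReal.ofReal (Q b - Q a))
    (hμsupp : μ (Icc (0:ℝ) 1)ᶜ = 0)
    (d : ℕ → ℝ)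
    (hd : ∀ n : ℕ, d n = ∫ x in Icc (0:ℝ) 1, Real.cos (2 * π * n * x) ∂μ)
    (m : ℕ → ℝ)
    (hm : ∀ L : ℕ, m L = ∫ x in Icc (0:ℝ) 1, x ^ L ∂μ)
:
    ∀ v : ℕ, 1 ≤ v →
      Summable (fun n : ℕ => d (n + 1) / ((n : ℝ) + 1) ^ (2 * v)) ∧
      (∑' n : ℕ, d (n + 1) / ((n : ℝ) + 1) ^ (2 * v)) / (2 * π) ^ (2 * v)
        = ((-1 : ℝ) ^ (v + 1) / 2) *
          ∑ L ∈ Finset.range (2 * v + 1),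
            (bernoulli (2 * v - L) : ℝ) * m L / (((2 * v - L).factorial : ℝ) * (L.factorial : ℝ)) :=
  stmt_5_general μ d hd m hm
end

section
/- Suppose that: F(x) = O(x) as x → 0⁺; 1 − F(x) = O(1/x) as x → ∞; for every odd integer r ≥ 1 the function x ↦ (log x)^r is ν-integrable and ∫₀^∞ (log x)^r dν(x) = 0. Then F(x) + F(1/x) = 1 for every x > 0. -/
open MeasureTheory Real Set Filter Asymptotics

/-!
The O-bounds say that `ν` is weak-L¹ both for `x` and for `1/x`, so `x ^ (1/2)` and `x ^ (-1/2)`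
are `ν`-integrable: the law of `log x` has exponential moments near `0`. Its complex moment
generating function is then analytic on a vertical strip around the imaginary axis, and its Taylor
coefficients at `0` are the moments. Since the odd moments of `log` vanish, `log` and `-log` have
the same moments, hence the same complex mgf on the strip and the same characteristic function.
So the law of `log x` is symmetric, which (`ν` having no atoms, `F` being continuous) is
`F x = 1 - F x⁻¹`.
-/

open Topology

theorem AnalyticAt.eventuallyEq_of_iteratedDeriv_eq {𝕜 : Type*} [NontriviallyNormedField 𝕜]
    [CompleteSpace 𝕜] [CharZero 𝕜] {f g : 𝕜 → 𝕜} {x : 𝕜} (hf : AnalyticAt 𝕜 f x)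
    (hg : AnalyticAt 𝕜 g x) (h : ∀ n, iteratedDeriv n f x = iteratedDeriv n g x) :
    f =ᶠ[𝓝 x] g := by
  have hg' := hg.hasFPowerSeriesAt
  simp_rw [← h] at hg'
  have hfg := hf.hasFPowerSeriesAt.sub hg'
  rw [sub_self] at hfg
  filter_upwards [hfg.eventually_eq_zero] with y hy
  exact sub_eq_zero.mp hy

namespace ProbabilityTheory

variable {Ω Ω' : Type*} {mΩ : MeasurableSpace Ω} {mΩ' : MeasurableSpace Ω'}
  {μ : Measure Ω} {μ' : Measure Ω'} {X : Ω → ℝ} {Y : Ω' → ℝ}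

lemma integrableExpSet_neg : integrableExpSet (-X) μ = -integrableExpSet X μ := by
  ext t
  simp [integrableExpSet]

theorem map_eq_map_of_moment_eq [IsFiniteMeasure μ] [IsFiniteMeasure μ']
    (hX : 0 ∈ interior (integrableExpSet X μ)) (hY : 0 ∈ interior (integrableExpSet Y μ'))
    (h : ∀ n, moment X n μ = moment Y n μ') :
    μ.map X = μ'.map Y := by
  set S : Set ℂ :=
    Complex.reLm ⁻¹' (interior (integrableExpSet X μ) ∩ interior (integrableExpSet Y μ'))
  have hS : IsPreconnected S :=
    ((convex_integrableExpSet.interior.inter convex_integrableExpSet.interior).linear_preimage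
      Complex.reLm).isPreconnected
  have hXS : AnalyticOnNhd ℂ (complexMGF X μ) S := analyticOnNhd_complexMGF.mono fun z hz ↦ hz.1
  have hYS : AnalyticOnNhd ℂ (complexMGF Y μ') S := analyticOnNhd_complexMGF.mono fun z hz ↦ hz.2
  have h0S : (0 : ℂ) ∈ S := by simpa [S] using ⟨hX, hY⟩
  have hnear : complexMGF X μ =ᶠ[𝓝 0] complexMGF Y μ' := by
    refine (hXS 0 h0S).eventuallyEq_of_iteratedDeriv_eq (hYS 0 h0S) fun n ↦ ?_
    rw [iteratedDeriv_complexMGF (by simpa using hX), iteratedDeriv_complexMGF (by simpa using hY)]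
    have := congrArg (fun r : ℝ ↦ (r : ℂ)) (h n)
    simpa [moment, ← integral_complex_ofReal] using this
  have hEq := hXS.eqOn_of_preconnected_of_eventuallyEq hYS hS h0S hnear
  refine Measure.ext_of_charFun (funext fun t ↦ ?_)
  rw [← complexMGF_mul_I (aemeasurable_of_mem_interior_integrableExpSet hX),
    ← complexMGF_mul_I (aemeasurable_of_mem_interior_integrableExpSet hY)]
  exact hEq (by simpa [S] using ⟨hX, hY⟩)

lemma moment_neg (n : ℕ) : moment (-X) n μ = (-1) ^ n * moment X n μ := by
  rw [moment, moment, ← integral_const_mul]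
  congr with ω
  exact neg_pow (X ω) n

theorem map_neg_eq_map_of_moment_odd_eq_zero [IsFiniteMeasure μ]
    (hX : 0 ∈ interior (integrableExpSet X μ)) (h : ∀ n, Odd n → moment X n μ = 0) :
    μ.map (-X) = μ.map X := by
  refine map_eq_map_of_moment_eq (by
    rw [integrableExpSet_neg, mem_interior_iff_mem_nhds] at *; exact neg_mem_nhds_zero ℝ hX) hX
    fun n ↦ ?_
  rcases n.even_or_odd with hn | hn
  · rw [moment_neg, hn.neg_one_pow, one_mul]
  · rw [moment_neg, h n hn, mul_zero]

end ProbabilityTheory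

open ProbabilityTheory

theorem integrable_rpow_of_measure_lt_le_div {α : Type*} [MeasurableSpace α] {μ : Measure α}
    [IsFiniteMeasure μ] {f : α → ℝ} (hf_nn : 0 ≤ᵐ[μ] f) (hf : AEMeasurable f μ) {p c : ℝ}
    (hp0 : 0 < p) (hp1 : p < 1) (h : ∀ᶠ u in atTop, μ {a | u < f a} ≤ ENNReal.ofReal (c / u)) :
    Integrable (fun a ↦ f a ^ p) μ := by
  obtain ⟨u₀, hu₀⟩ := eventually_atTop.mp (h.and (eventually_gt_atTop 0))
  have hu₀pos : 0 < u₀ := (hu₀ u₀ le_rfl).2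
  refine ⟨(hf.pow_const p).aestronglyMeasurable, ?_⟩
  -- layer cake: the integrand `μ {t < f} * t ^ (p - 1)` is `O(t ^ (p - 2))` at infinity
  rw [hasFiniteIntegral_iff_ofReal (hf_nn.mono fun a ha ↦ rpow_nonneg ha p),
    lintegral_rpow_eq_lintegral_meas_lt_mul μ hf_nn hf hp0]
  refine ENNReal.mul_lt_top ENNReal.ofReal_lt_top ?_
  have hnear : IntegrableOn (fun t ↦ μ.real univ * t ^ (p - 1)) (Ioc 0 u₀) :=
    ((intervalIntegral.intervalIntegrable_rpow' (by linarith)).const_mul _).1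
  have hfar : IntegrableOn (fun t ↦ c / t * t ^ (p - 1)) (Ioi u₀) := by
    refine IntegrableOn.congr_fun ((integrableOn_Ioi_rpow_of_lt (by linarith : p - 1 - 1 < -1)
      hu₀pos).const_mul c) (fun t ht ↦ ?_) measurableSet_Ioi
    rw [rpow_sub_one (hu₀pos.trans ht).ne']
    ring
  rw [← Ioc_union_Ioi_eq_Ioi hu₀pos.le]
  refine (lintegral_union_le _ _ _).trans_lt (ENNReal.add_lt_top.mpr ⟨?_, ?_⟩)
  · refine (setLIntegral_mono' measurableSet_Ioc fun t ht ↦ ?_).trans_lt hnear.lintegral_lt_top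
    rw [ENNReal.ofReal_mul measureReal_nonneg, ofReal_measureReal]
    exact mul_le_mul_left (measure_mono (subset_univ _)) _
  · refine (setLIntegral_mono' measurableSet_Ioi fun t ht ↦ ?_).trans_lt hfar.lintegral_lt_top
    rw [ENNReal.ofReal_mul' (rpow_nonneg (hu₀pos.trans ht).le _)]
    exact mul_le_mul_left (hu₀ t (le_of_lt ht)).1 _

theorem zero_mem_interior_integrableExpSet_log {μ : Measure ℝ} [IsFiniteMeasure μ]
    (hpos : ∀ᵐ x ∂μ, 0 < x) {c c' : ℝ}
    (htop : ∀ᶠ u in atTop, μ {x | u < x} ≤ ENNReal.ofReal (c / u))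
    (hzero : ∀ᶠ u in atTop, μ {x | u < x⁻¹} ≤ ENNReal.ofReal (c' / u)) :
    0 ∈ interior (integrableExpSet Real.log μ) := by
  have hp : (0 : ℝ) < 1 / 2 := by norm_num
  have hp' : (1 / 2 : ℝ) < 1 := by norm_num
  have hplus : Integrable (fun x ↦ exp (1 / 2 * log x)) μ := by
    refine (integrable_rpow_of_measure_lt_le_div (hpos.mono fun x hx ↦ hx.le)
      measurable_id.aemeasurable hp hp' htop).congr (hpos.mono fun x hx ↦ ?_)
    simp only [rpow_def_of_pos hx, mul_comm]
  have hminus : Integrable (fun x ↦ exp (-(1 / 2) * log x)) μ := by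
    refine (integrable_rpow_of_measure_lt_le_div (hpos.mono fun x hx ↦ (inv_pos.2 hx).le)
      measurable_inv.aemeasurable hp hp' hzero).congr (hpos.mono fun x hx ↦ ?_)
    simp only [rpow_def_of_pos (inv_pos.2 hx), log_inv, mul_comm, neg_mul, mul_neg]
  refine mem_interior_iff_mem_nhds.mpr (mem_of_superset
    (Ioo_mem_nhds (by norm_num : -(1 / 2 : ℝ) < 0) hp)
    fun t ht ↦ integrable_exp_mul_of_abs_le hplus hminus ?_)
  rw [abs_of_pos hp]
  exact abs_le.2 ⟨ht.1.le, ht.2.le⟩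

section LebesgueStieltjes

variable {F : ℝ → ℝ} {ν : Measure ℝ}

lemma measure_Iic_eq (hF0 : F 0 = 0)
    (hν : ∀ a b : ℝ, 0 ≤ a → a ≤ b → ν (Ioc a b) = ENNReal.ofReal (F b - F a))
    (hνsupp : ν (Ioi (0:ℝ))ᶜ = 0) {b : ℝ} (hb : 0 ≤ b) : ν (Iic b) = ENNReal.ofReal (F b) := by
  rw [← measure_inter_conull hνsupp, Iic_inter_Ioi, hν 0 b le_rfl hb, hF0, sub_zero]

lemma isProbabilityMeasure_of_tendsto_atTop (hF0 : F 0 = 0)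
    (hν : ∀ a b : ℝ, 0 ≤ a → a ≤ b → ν (Ioc a b) = ENNReal.ofReal (F b - F a))
    (hνsupp : ν (Ioi (0:ℝ))ᶜ = 0) (hFlim : Tendsto F atTop (𝓝 1)) :
    IsProbabilityMeasure ν := by
  have hIic : ∀ᶠ x in atTop, ENNReal.ofReal (F x) = ν (Iic x) := by
    filter_upwards [eventually_ge_atTop 0] with x hx
    rw [measure_Iic_eq hF0 hν hνsupp hx]
  have hlim := (ENNReal.tendsto_ofReal hFlim).congr' hIic
  rw [ENNReal.ofReal_one] at hlim
  exact ⟨tendsto_nhds_unique (tendsto_measure_Iic_atTop ν) hlim⟩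

lemma measure_Ioi_eq [IsProbabilityMeasure ν] (hFmono : MonotoneOn F (Ici 0)) (hF0 : F 0 = 0)
    (hν : ∀ a b : ℝ, 0 ≤ a → a ≤ b → ν (Ioc a b) = ENNReal.ofReal (F b - F a))
    (hνsupp : ν (Ioi (0:ℝ))ᶜ = 0) {b : ℝ} (hb : 0 ≤ b) :
    ν (Ioi b) = ENNReal.ofReal (1 - F b) := by
  have hFb : 0 ≤ F b := hF0 ▸ hFmono self_mem_Ici hb hb
  rw [← compl_Iic, measure_compl measurableSet_Iic (measure_ne_top _ _), measure_univ,
    measure_Iic_eq hF0 hν hνsupp hb, ENNReal.ofReal_sub _ hFb, ENNReal.ofReal_one]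

lemma measure_singleton_eq_zero (hFcont : ContinuousOn F (Ici 0))
    (hν : ∀ a b : ℝ, 0 ≤ a → a ≤ b → ν (Ioc a b) = ENNReal.ofReal (F b - F a))
    {b : ℝ} (hb : 0 < b) : ν {b} = 0 := by
  have hF : Tendsto (fun a ↦ ENNReal.ofReal (F b - F a)) (𝓝[<] b) (𝓝 0) := by
    have := ((hFcont.continuousAt (Ici_mem_nhds hb)).tendsto.mono_left
      (nhdsWithin_le_nhds (s := Iio b))).const_sub (F b)
    simpa using ENNReal.tendsto_ofReal this
  refine le_antisymm (ge_of_tendsto hF ?_) zero_le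
  filter_upwards [Ioo_mem_nhdsLT hb] with a ha
  rw [← hν a b ha.1.le ha.2.le]
  exact measure_mono (singleton_subset_iff.2 ⟨ha.2, le_rfl⟩)

lemma exists_measure_lt_le_of_isBigO_atTop [IsProbabilityMeasure ν]
    (hFmono : MonotoneOn F (Ici 0)) (hF0 : F 0 = 0)
    (hν : ∀ a b : ℝ, 0 ≤ a → a ≤ b → ν (Ioc a b) = ENNReal.ofReal (F b - F a))
    (hνsupp : ν (Ioi (0:ℝ))ᶜ = 0) (hOtop : (fun x : ℝ => 1 - F x) =O[atTop] (fun x : ℝ => x⁻¹)) :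
    ∃ c : ℝ, ∀ᶠ u in atTop, ν {x | u < x} ≤ ENNReal.ofReal (c / u) := by
  obtain ⟨c, hc⟩ := hOtop.bound
  refine ⟨c, ?_⟩
  filter_upwards [hc, eventually_gt_atTop 0] with u hu hu0
  change ν (Ioi u) ≤ _
  rw [measure_Ioi_eq hFmono hF0 hν hνsupp hu0.le]
  refine ENNReal.ofReal_le_ofReal ((le_abs_self _).trans ?_)
  simpa [abs_of_pos hu0, div_eq_mul_inv] using hu

lemma exists_measure_lt_inv_le_of_isBigO_zero (hF0 : F 0 = 0)
    (hν : ∀ a b : ℝ, 0 ≤ a → a ≤ b → ν (Ioc a b) = ENNReal.ofReal (F b - F a))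
    (hνsupp : ν (Ioi (0:ℝ))ᶜ = 0)
    (hO0 : (fun x : ℝ => F x) =O[nhdsWithin 0 (Ioi 0)] (fun x : ℝ => x)) :
    ∃ c : ℝ, ∀ᶠ u in atTop, ν {x | u < x⁻¹} ≤ ENNReal.ofReal (c / u) := by
  obtain ⟨c, hc⟩ := hO0.bound
  refine ⟨c, ?_⟩
  filter_upwards [tendsto_inv_atTop_nhdsGT_zero.eventually hc, eventually_gt_atTop 0]
    with u hu hu0
  calc ν {x | u < x⁻¹} = ν ({x | u < x⁻¹} ∩ Ioi 0) := (measure_inter_conull hνsupp).symm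
    _ ≤ ν (Iic u⁻¹) := measure_mono fun x ⟨hx, hx0⟩ ↦ ((lt_inv_comm₀ hu0 hx0).1 hx).le
    _ = ENNReal.ofReal (F u⁻¹) := measure_Iic_eq hF0 hν hνsupp (inv_pos.2 hu0).le
    _ ≤ ENNReal.ofReal (c / u) := by
      refine ENNReal.ofReal_le_ofReal ((le_abs_self _).trans ?_)
      simpa [abs_of_pos hu0, div_eq_mul_inv] using hu

end LebesgueStieltjes

section LogPushforward

variable {μ : Measure ℝ}

lemma map_log_Iic_log (hμ : μ (Ioi (0:ℝ))ᶜ = 0) {x : ℝ} (hx : 0 < x) :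
    μ.map log (Iic (log x)) = μ (Iic x) := by
  rw [Measure.map_apply measurable_log measurableSet_Iic, ← measure_inter_conull hμ,
    ← measure_inter_conull (s := Iic x) hμ]
  congr 1
  ext y
  simp only [mem_inter_iff, mem_preimage, mem_Iic, mem_Ioi, and_congr_left_iff]
  exact fun hy ↦ log_le_log_iff hy hx

lemma map_neg_log_Iic_log (hμ : μ (Ioi (0:ℝ))ᶜ = 0) {x : ℝ} (hx : 0 < x) :
    μ.map (-log) (Iic (log x)) = μ (Ici x⁻¹) := by
  rw [Measure.map_apply measurable_log.neg measurableSet_Iic, ← measure_inter_conull hμ,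
    ← measure_inter_conull (s := Ici x⁻¹) hμ]
  congr 1
  ext y
  simp only [mem_inter_iff, mem_preimage, mem_Iic, mem_Ici, mem_Ioi, Pi.neg_apply,
    and_congr_left_iff]
  intro hy
  rw [neg_le, ← log_inv, log_le_log_iff (inv_pos.2 hx) hy]

end LogPushforward

theorem stmt_11
    (F : ℝ → ℝ) (ν : Measure ℝ)
    (hFcont : ContinuousOn F (Ici 0))
    (hFmono : MonotoneOn F (Ici 0))
    (hF0 : F 0 = 0)
    (hFlim : Tendsto F atTop (nhds 1))
    (hν : ∀ a b : ℝ, 0 ≤ a → a ≤ b → ν (Ioc a b) = ENNReal.ofReal (F b - F a))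
    (hνsupp : ν (Ioi (0:ℝ))ᶜ = 0)
    (hO0 : (fun x : ℝ => F x) =O[nhdsWithin 0 (Ioi 0)] (fun x : ℝ => x))
    (hOtop : (fun x : ℝ => 1 - F x) =O[atTop] (fun x : ℝ => x⁻¹))
    (hmom : ∀ r : ℕ, Odd r →
      IntegrableOn (fun x : ℝ => (Real.log x) ^ r) (Ioi 0) ν ∧
      (∫ x in Ioi (0:ℝ), (Real.log x) ^ r ∂ν) = 0)
:
    ∀ x : ℝ, 0 < x → F x + F x⁻¹ = 1 := by
  intro x hx
  have hpos : ∀ᵐ y ∂ν, y ∈ Ioi 0 := mem_ae_iff.mpr hνsupp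
  have := isProbabilityMeasure_of_tendsto_atTop hF0 hν hνsupp hFlim
  obtain ⟨c, htop⟩ := exists_measure_lt_le_of_isBigO_atTop hFmono hF0 hν hνsupp hOtop
  obtain ⟨c', hzero⟩ := exists_measure_lt_inv_le_of_isBigO_zero hF0 hν hνsupp hO0
  have hodd : ∀ r, Odd r → moment log r ν = 0 := fun r hr ↦ by
    simpa [moment, Measure.restrict_eq_self_of_ae_mem hpos] using (hmom r hr).2
  have hsymm := map_neg_eq_map_of_moment_odd_eq_zero
    (zero_mem_interior_integrableExpSet_log hpos htop hzero) hodd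
  have hx' : 0 < x⁻¹ := inv_pos.2 hx
  have h := congrArg (fun μ : Measure ℝ ↦ μ (Iic (log x))) hsymm
  simp only [map_neg_log_Iic_log hνsupp hx, map_log_Iic_log hνsupp hx] at h
  rw [← measure_sdiff_null (s := Ici x⁻¹) (measure_singleton_eq_zero hFcont hν hx'),
    Ici_sdiff_left, measure_Ioi_eq hFmono hF0 hν hνsupp hx'.le,
    measure_Iic_eq hF0 hν hνsupp hx.le] at h
  have hF1 : F x⁻¹ ≤ 1 :=
    ENNReal.ofReal_le_one.1 (measure_Iic_eq hF0 hν hνsupp hx'.le ▸ prob_le_one)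
  have hFx : 0 ≤ F x := hF0 ▸ hFmono self_mem_Ici hx.le hx.le
  linarith [(ENNReal.ofReal_eq_ofReal_iff (by linarith) hFx).1 h]
end

section
/- Define the operator 𝒯 on continuous functions on [0,1] by (𝒯f)(x) = (1/2)·f(x/(x+1)) + (1/2)·f(1/(x+1)). Then for every integer n ≥ 1 and every fixed x ∈ [0,1], the iterates satisfy 𝒯^s[y ↦ cos(2πny)](x) → d_n as s → ∞. -/
/-!
Since `Q (x / (x + 1)) = Q x / 2` and `Q (1 / (x + 1)) = 1 - Q x / 2`, both branches of `𝒯`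
halve distances measured through `Q`. Hence if `|f u - f v| ≤ ε` whenever `|Q u - Q v| ≤ δ`, the
same holds for `𝒯 f` with `2 δ`, and once `2 ^ s δ ≥ 1` the function `𝒯^s f` oscillates by at
most `ε` on `[0, 1]`. On the other hand `μ` is `𝒯`-invariant, because the two branches push `μ`
forward to twice its restrictions to `[0, 1/2]` and `[1/2, 1]`. So `𝒯^s f` is nearly constant
with mean `∫ f dμ`.
-/

open MeasureTheory Real Set Filter Asymptotics Topology

noncomputable def transferOp (f : ℝ → ℝ) (x : ℝ) : ℝ :=
  1 / 2 * f (x / (x + 1)) + 1 / 2 * f (1 / (x + 1))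

lemma div_add_one_mem_Icc {x : ℝ} (hx : x ∈ Icc (0:ℝ) 1) : x / (x + 1) ∈ Icc (0:ℝ) 1 :=
  ⟨div_nonneg hx.1 (by linarith [hx.1]), by rw [div_le_one (by linarith [hx.1])]; linarith⟩

lemma one_div_add_one_mem_Icc {x : ℝ} (hx : x ∈ Icc (0:ℝ) 1) : 1 / (x + 1) ∈ Icc (0:ℝ) 1 :=
  ⟨div_nonneg zero_le_one (by linarith [hx.1]),
    by rw [div_le_one (by linarith [hx.1])]; linarith [hx.1]⟩

section Modulus

variable {Q : ℝ → ℝ}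

lemma apply_div_add_one (hQfun : ∀ x ∈ Icc (0:ℝ) 1, Q x = 2 * Q (x / (x + 1)))
    {x : ℝ} (hx : x ∈ Icc (0:ℝ) 1) : Q (x / (x + 1)) = Q x / 2 := by
  linarith [hQfun x hx]

lemma apply_one_div_add_one (hQsymm : ∀ x ∈ Icc (0:ℝ) 1, Q x = 1 - Q (1 - x))
    (hQfun : ∀ x ∈ Icc (0:ℝ) 1, Q x = 2 * Q (x / (x + 1))) {x : ℝ} (hx : x ∈ Icc (0:ℝ) 1) :
    Q (1 / (x + 1)) = 1 - Q x / 2 := by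
  have h : 1 - 1 / (x + 1) = x / (x + 1) := by
    field_simp [show x + 1 ≠ 0 by linarith [hx.1]]
    ring
  rw [hQsymm _ (one_div_add_one_mem_Icc hx), h, apply_div_add_one hQfun hx]

def QModulus (Q f : ℝ → ℝ) (δ ε : ℝ) : Prop :=
  ∀ u ∈ Icc (0:ℝ) 1, ∀ v ∈ Icc (0:ℝ) 1, |Q u - Q v| ≤ δ → |f u - f v| ≤ ε

lemma exists_QModulus (hQcont : ContinuousOn Q (Icc 0 1)) (hQmono : StrictMonoOn Q (Icc 0 1))
    {f : ℝ → ℝ} (hf : ContinuousOn f (Icc 0 1)) {ε : ℝ} (hε : 0 < ε) :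
    ∃ δ > 0, QModulus Q f δ ε := by
  let e := (hQcont.domRestrict.subtype_mk _).homeoOfEquivCompactToT2
    (f := Equiv.Set.imageOfInjOn Q (Icc 0 1) hQmono.injOn)
  have : CompactSpace (Q '' Icc 0 1) :=
    isCompact_iff_compactSpace.mp (isCompact_Icc.image_of_continuousOn hQcont)
  have hg : UniformContinuous fun t => f (e.symm t) :=
    CompactSpace.uniformContinuous_of_continuous (hf.domRestrict.comp e.symm.continuous)
  obtain ⟨δ, hδ, hδg⟩ := Metric.uniformContinuous_iff.mp hg ε hε
  refine ⟨δ / 2, half_pos hδ, fun u hu v hv huv => ?_⟩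
  have := hδg (a := e ⟨u, hu⟩) (b := e ⟨v, hv⟩) (huv.trans_lt (half_lt_self hδ))
  simp only [Homeomorph.symm_apply_apply, Real.dist_eq] at this
  exact this.le

lemma QModulus.transferOp {f : ℝ → ℝ} {δ ε : ℝ} (hf : QModulus Q f δ ε)
    (hQsymm : ∀ x ∈ Icc (0:ℝ) 1, Q x = 1 - Q (1 - x))
    (hQfun : ∀ x ∈ Icc (0:ℝ) 1, Q x = 2 * Q (x / (x + 1))) :
    QModulus Q (transferOp f) (2 * δ) ε := by
  intro u hu v hv huv
  rw [abs_le] at huv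
  have ha := hf _ (div_add_one_mem_Icc hu) _ (div_add_one_mem_Icc hv) <| by
    rw [apply_div_add_one hQfun hu, apply_div_add_one hQfun hv, abs_le]
    constructor <;> linarith
  have hb := hf _ (one_div_add_one_mem_Icc hu) _ (one_div_add_one_mem_Icc hv) <| by
    rw [apply_one_div_add_one hQsymm hQfun hu, apply_one_div_add_one hQsymm hQfun hv, abs_le]
    constructor <;> linarith
  rw [abs_le] at ha hb ⊢
  unfold _root_.transferOp
  constructor <;> linarith

lemma QModulus.iterate_transferOp {f : ℝ → ℝ} {δ ε : ℝ} (hf : QModulus Q f δ ε)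
    (hQsymm : ∀ x ∈ Icc (0:ℝ) 1, Q x = 1 - Q (1 - x))
    (hQfun : ∀ x ∈ Icc (0:ℝ) 1, Q x = 2 * Q (x / (x + 1))) (s : ℕ) :
    QModulus Q (_root_.transferOp^[s] f) (2 ^ s * δ) ε := by
  induction s with
  | zero => simpa using hf
  | succ s ih =>
    rw [Function.iterate_succ_apply', pow_succ', mul_assoc]
    exact ih.transferOp hQsymm hQfun

lemma QModulus.abs_sub_le {f : ℝ → ℝ} {δ ε : ℝ} (hf : QModulus Q f δ ε) (hδ : 1 ≤ δ)
    (hQmono : MonotoneOn Q (Icc 0 1)) (hQ0 : Q 0 = 0) (hQ1 : Q 1 = 1) {u v : ℝ}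
    (hu : u ∈ Icc (0:ℝ) 1) (hv : v ∈ Icc (0:ℝ) 1) : |f u - f v| ≤ ε := by
  refine hf u hu v hv (le_trans ?_ hδ)
  obtain ⟨⟨hu0, hu1⟩, ⟨hv0, hv1⟩⟩ := And.intro (hQmono.mapsTo_Icc hu) (hQmono.mapsTo_Icc hv)
  rw [abs_le]
  constructor <;> linarith

end Modulus

lemma measure_Iic_eq_measure_Iic_max_min {μ : Measure ℝ} {a b : ℝ}
    (hμ : ∀ᵐ x ∂μ, x ∈ Ioc a b) (t : ℝ) : μ (Iic t) = μ (Iic (max a (min t b))) := by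
  refine measure_congr ?_
  filter_upwards [hμ] with x hx
  refine propext ?_
  change x ≤ t ↔ x ≤ max a (min t b)
  rw [le_max_iff, le_min_iff]
  exact ⟨fun h => Or.inr ⟨h, hx.2⟩,
    fun h => h.elim (fun h => absurd h (not_le.mpr hx.1)) And.left⟩

lemma MeasureTheory.Measure.ext_of_Iic_of_ae_mem_Ioc {μ ν : Measure ℝ} [IsFiniteMeasure μ]
    {a b : ℝ} (hab : a ≤ b) (hμ : ∀ᵐ x ∂μ, x ∈ Ioc a b) (hν : ∀ᵐ x ∂ν, x ∈ Ioc a b)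
    (h : ∀ t ∈ Icc a b, μ (Iic t) = ν (Iic t)) : μ = ν := by
  refine Measure.ext_of_Iic _ _ fun t => ?_
  rw [measure_Iic_eq_measure_Iic_max_min hμ, measure_Iic_eq_measure_Iic_max_min hν]
  exact h _ ⟨le_max_left _ _, max_le hab (min_le_right _ _)⟩

structure IsStieltjesMeasure (μ : Measure ℝ) (Q : ℝ → ℝ) : Prop where
  zero : Q 0 = 0
  one : Q 1 = 1
  continuousOn : ContinuousOn Q (Icc 0 1)
  measure_Ioc : ∀ a b : ℝ, 0 ≤ a → a ≤ b → b ≤ 1 → μ (Ioc a b) = ENNReal.ofReal (Q b - Q a)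

namespace IsStieltjesMeasure

variable {Q : ℝ → ℝ} {μ : Measure ℝ} [IsProbabilityMeasure μ]

lemma ae_mem_Ioc (h : IsStieltjesMeasure μ Q) : ∀ᵐ x ∂μ, x ∈ Ioc (0:ℝ) 1 := by
  rw [ae_iff, ← compl_def, prob_compl_eq_zero_iff measurableSet_Ioc,
    h.measure_Ioc 0 1 le_rfl zero_le_one le_rfl, h.zero, h.one, sub_zero, ENNReal.ofReal_one]

lemma ae_mem_Icc (h : IsStieltjesMeasure μ Q) : ∀ᵐ x ∂μ, x ∈ Icc (0:ℝ) 1 :=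
  h.ae_mem_Ioc.mono fun _ => mem_Icc_of_Ioc

lemma measure_Iic (h : IsStieltjesMeasure μ Q) {t : ℝ} (ht : t ∈ Icc (0:ℝ) 1) :
    μ (Iic t) = ENNReal.ofReal (Q t) := by
  have hIic : Iic t =ᵐ[μ] Ioc 0 t := by
    filter_upwards [h.ae_mem_Ioc] with x hx
    exact propext ⟨fun h => ⟨hx.1, h⟩, And.right⟩
  rw [measure_congr hIic, h.measure_Ioc 0 t le_rfl ht.1 ht.2, h.zero, sub_zero]

lemma nullSingletonClass (h : IsStieltjesMeasure μ Q) : NullSingletonClass μ := by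
  refine ⟨fun y => ?_⟩
  by_cases hy : y ∈ Ioc (0:ℝ) 1
  · have hQy : Tendsto (fun z => ENNReal.ofReal (Q y - Q z)) (𝓝[<] y) (𝓝 0) := by
      have := ((h.continuousOn y (Ioc_subset_Icc_self hy)).mono_of_mem_nhdsWithin
        (mem_of_superset (Icc_mem_nhdsLT hy.1) (Icc_subset_Icc le_rfl hy.2))).const_sub (Q y)
      simpa [Function.comp_def] using (ENNReal.continuous_ofReal.tendsto _).comp this
    refine nonpos_iff_eq_zero.mp (ge_of_tendsto hQy ?_)
    filter_upwards [Ioo_mem_nhdsLT hy.1] with z hz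
    rw [← h.measure_Ioc z y hz.1.le hz.2.le hy.2]
    exact measure_mono (singleton_subset_iff.mpr ⟨hz.2, le_rfl⟩)
  · exact measure_mono_null (singleton_subset_iff.mpr hy) (ae_iff.mp h.ae_mem_Ioc)

lemma map_one_sub (h : IsStieltjesMeasure μ Q)
    (hQsymm : ∀ x ∈ Icc (0:ℝ) 1, Q x = 1 - Q (1 - x)) :
    μ.map (fun x => 1 - x) = μ := by
  have := h.nullSingletonClass
  have hσ : Measurable fun x : ℝ => 1 - x := by fun_prop
  refine Measure.ext_of_Iic_of_ae_mem_Ioc zero_le_one ?_ h.ae_mem_Ioc fun t ht => ?_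
  · refine (ae_map_iff hσ.aemeasurable measurableSet_Ioc).2 ?_
    filter_upwards [h.ae_mem_Ioc, μ.ae_ne 1] with x hx hx1
    exact ⟨by linarith [lt_of_le_of_ne hx.2 hx1], by linarith [hx.1]⟩
  · have hpre : (fun x => 1 - x) ⁻¹' Iic t =ᵐ[μ] Ioc (1 - t) 1 := by
      filter_upwards [h.ae_mem_Ioc, μ.ae_ne (1 - t)] with x hx hxt
      refine propext ⟨fun hx' => ⟨?_, hx.2⟩, fun hx' => ?_⟩
      · exact lt_of_le_of_ne (by change 1 - x ≤ t at hx'; linarith) hxt.symm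
      · change 1 - x ≤ t; linarith [hx'.1]
    rw [Measure.map_apply hσ measurableSet_Iic, h.measure_Iic ht, measure_congr hpre,
      h.measure_Ioc _ _ (by linarith [ht.2]) (by linarith [ht.1]) le_rfl, h.one, hQsymm t ht]

lemma map_div_add_one (h : IsStieltjesMeasure μ Q)
    (hQfun : ∀ x ∈ Icc (0:ℝ) 1, Q x = 2 * Q (x / (x + 1))) :
    μ.map (fun x => x / (x + 1)) = (2 : ENNReal) • μ.restrict (Iic (1 / 2)) := by
  have ha : Measurable fun x : ℝ => x / (x + 1) := by fun_prop
  refine Measure.ext_of_Iic_of_ae_mem_Ioc zero_le_one ?_ ?_ fun t ht => ?_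
  · refine (ae_map_iff ha.aemeasurable measurableSet_Ioc).2 ?_
    filter_upwards [h.ae_mem_Ioc] with x hx
    exact ⟨div_pos hx.1 (by linarith [hx.1]),
      (div_le_one (by linarith [hx.1])).2 (by linarith)⟩
  · exact Measure.ae_smul_measure (ae_restrict_of_ae h.ae_mem_Ioc) _
  rw [Measure.map_apply ha measurableSet_Iic, Measure.smul_apply,
    Measure.restrict_apply measurableSet_Iic, Iic_inter_Iic, smul_eq_mul]
  rcases le_or_gt t (1 / 2) with ht' | ht'
  · have hpre : (fun x => x / (x + 1)) ⁻¹' Iic t =ᵐ[μ] Iic (t / (1 - t)) := by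
      filter_upwards [h.ae_mem_Ioc] with x hx
      refine propext ?_
      change x / (x + 1) ≤ t ↔ x ≤ t / (1 - t)
      rw [div_le_iff₀ (by linarith [hx.1]), le_div_iff₀ (by linarith)]
      constructor <;> intro <;> linarith
    have hc : t / (1 - t) ∈ Icc (0:ℝ) 1 :=
      ⟨div_nonneg ht.1 (by linarith), (div_le_one (by linarith)).2 (by linarith)⟩
    have hat : t / (1 - t) / (t / (1 - t) + 1) = t := by
      field_simp [show 1 - t ≠ 0 by linarith]
      ring
    rw [measure_congr hpre, min_eq_left ht', h.measure_Iic hc, h.measure_Iic ht, hQfun _ hc, hat,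
      ENNReal.ofReal_mul zero_le_two, ENNReal.ofReal_ofNat]
  · have hpre : (fun x => x / (x + 1)) ⁻¹' Iic t =ᵐ[μ] Iic 1 := by
      filter_upwards [h.ae_mem_Ioc] with x hx
      refine propext ⟨fun _ => hx.2, fun _ => ?_⟩
      change x / (x + 1) ≤ t
      rw [div_le_iff₀ (by linarith [hx.1])]
      nlinarith [hx.1, hx.2]
    have hQhalf : Q (1 / 2) = 1 / 2 := by
      have := hQfun 1 ⟨zero_le_one, le_rfl⟩
      norm_num [h.one] at this
      linarith
    rw [measure_congr hpre, min_eq_right ht'.le, h.measure_Iic ⟨zero_le_one, le_rfl⟩,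
      h.measure_Iic (by norm_num), h.one, hQhalf, ← ENNReal.ofReal_ofNat 2,
      ← ENNReal.ofReal_mul zero_le_two]
    norm_num

lemma map_one_div_add_one (h : IsStieltjesMeasure μ Q)
    (hQsymm : ∀ x ∈ Icc (0:ℝ) 1, Q x = 1 - Q (1 - x))
    (hQfun : ∀ x ∈ Icc (0:ℝ) 1, Q x = 2 * Q (x / (x + 1))) :
    μ.map (fun x => 1 / (x + 1)) = (2 : ENNReal) • μ.restrict (Ici (1 / 2)) := by
  have ha : Measurable fun x : ℝ => x / (x + 1) := by fun_prop
  have hσ : Measurable fun x : ℝ => 1 - x := by fun_prop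
  -- only almost everywhere: at `x = -1` the junk value `1 / 0 = 0` breaks the identity
  have hb : (fun x : ℝ => 1 / (x + 1)) =ᵐ[μ] (fun x => 1 - x) ∘ fun x => x / (x + 1) := by
    filter_upwards [h.ae_mem_Ioc] with x hx
    change 1 / (x + 1) = 1 - x / (x + 1)
    field_simp [show x + 1 ≠ 0 by linarith [hx.1]]
    ring
  have hpre : (fun x : ℝ => 1 - x) ⁻¹' Ici (1 / 2) = Iic (1 / 2) := by
    ext x
    simp only [mem_preimage, mem_Ici, mem_Iic]
    constructor <;> intro <;> linarith
  rw [Measure.map_congr hb, ← Measure.map_map hσ ha, h.map_div_add_one hQfun, Measure.map_smul,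
    ← hpre, ← Measure.restrict_map hσ measurableSet_Ici, h.map_one_sub hQsymm]

lemma map_add_map (h : IsStieltjesMeasure μ Q)
    (hQsymm : ∀ x ∈ Icc (0:ℝ) 1, Q x = 1 - Q (1 - x))
    (hQfun : ∀ x ∈ Icc (0:ℝ) 1, Q x = 2 * Q (x / (x + 1))) :
    μ.map (fun x => x / (x + 1)) + μ.map (fun x => 1 / (x + 1)) = (2 : ENNReal) • μ := by
  have := h.nullSingletonClass
  rw [h.map_div_add_one hQfun, h.map_one_div_add_one hQsymm hQfun, ← smul_add,
    Measure.restrict_congr_set Ioi_ae_eq_Ici.symm, ← compl_Iic,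
    Measure.restrict_add_restrict_compl measurableSet_Iic]

lemma integrable_transferOp (h : IsStieltjesMeasure μ Q)
    (hQsymm : ∀ x ∈ Icc (0:ℝ) 1, Q x = 1 - Q (1 - x))
    (hQfun : ∀ x ∈ Icc (0:ℝ) 1, Q x = 2 * Q (x / (x + 1))) {f : ℝ → ℝ} (hf : Integrable f μ) :
    Integrable (transferOp f) μ ∧ ∫ x, transferOp f x ∂μ = ∫ x, f x ∂μ := by
  have hsum := h.map_add_map hQsymm hQfun
  have h2f : Integrable f ((2 : ENNReal) • μ) := hf.smul_measure ENNReal.ofNat_ne_top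
  have hfa : Integrable f (μ.map fun x => x / (x + 1)) :=
    h2f.mono_measure (hsum ▸ Measure.le_add_right le_rfl)
  have hfb : Integrable f (μ.map fun x => 1 / (x + 1)) :=
    h2f.mono_measure (hsum ▸ Measure.le_add_left le_rfl)
  have ha : AEMeasurable (fun x : ℝ => x / (x + 1)) μ := by fun_prop
  have hb : AEMeasurable (fun x : ℝ => 1 / (x + 1)) μ := by fun_prop
  have hfa' : Integrable (fun x => 1 / 2 * f (x / (x + 1))) μ :=
    (hfa.comp_aemeasurable ha).const_mul _
  have hfb' : Integrable (fun x => 1 / 2 * f (1 / (x + 1))) μ :=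
    (hfb.comp_aemeasurable hb).const_mul _
  refine ⟨hfa'.add hfb', ?_⟩
  unfold transferOp
  rw [integral_add hfa' hfb',
    integral_const_mul, integral_const_mul, ← integral_map ha hfa.1, ← integral_map hb hfb.1,
    ← mul_add, ← integral_add_measure hfa hfb, hsum, integral_smul_measure,
    ENNReal.toReal_ofNat, smul_eq_mul]
  ring

lemma integrable_iterate_transferOp (h : IsStieltjesMeasure μ Q)
    (hQsymm : ∀ x ∈ Icc (0:ℝ) 1, Q x = 1 - Q (1 - x))
    (hQfun : ∀ x ∈ Icc (0:ℝ) 1, Q x = 2 * Q (x / (x + 1))) {f : ℝ → ℝ} (hf : Integrable f μ)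
    (s : ℕ) :
    Integrable (transferOp^[s] f) μ ∧ ∫ x, (transferOp^[s] f) x ∂μ = ∫ x, f x ∂μ := by
  induction s with
  | zero => exact ⟨hf, rfl⟩
  | succ s ih =>
    rw [Function.iterate_succ_apply']
    obtain ⟨hint, heq⟩ := h.integrable_transferOp hQsymm hQfun ih.1
    exact ⟨hint, heq.trans ih.2⟩

end IsStieltjesMeasure

lemma abs_sub_integral_le {α : Type*} [MeasurableSpace α] {μ : Measure α}
    [IsProbabilityMeasure μ] {g : α → ℝ} (hg : Integrable g μ) {x : α} {ε : ℝ}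
    (h : ∀ᵐ u ∂μ, |g x - g u| ≤ ε) :
    |g x - ∫ u, g u ∂μ| ≤ ε := by
  have hx : g x - ∫ u, g u ∂μ = ∫ u, (g x - g u) ∂μ := by
    rw [integral_sub (integrable_const _) hg, integral_const, probReal_univ, one_smul]
  rw [hx]
  simpa using
    norm_integral_le_of_norm_le_const (h.mono fun u hu => (Real.norm_eq_abs _).trans_le hu)

theorem IsStieltjesMeasure.tendsto_iterate_transferOp {Q : ℝ → ℝ} {μ : Measure ℝ}
    [IsProbabilityMeasure μ] (h : IsStieltjesMeasure μ Q) (hQmono : StrictMonoOn Q (Icc 0 1))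
    (hQsymm : ∀ x ∈ Icc (0:ℝ) 1, Q x = 1 - Q (1 - x))
    (hQfun : ∀ x ∈ Icc (0:ℝ) 1, Q x = 2 * Q (x / (x + 1)))
    {f : ℝ → ℝ} (hf : ContinuousOn f (Icc 0 1)) {x : ℝ} (hx : x ∈ Icc (0:ℝ) 1) :
    Tendsto (fun s => (transferOp^[s] f) x) atTop (𝓝 (∫ y, f y ∂μ)) := by
  have hfint : Integrable f μ := by
    simpa [IntegrableOn, Measure.restrict_eq_self_of_ae_mem h.ae_mem_Icc] using
      hf.integrableOn_Icc (μ := μ)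
  refine Metric.tendsto_nhds.mpr fun ε hε => ?_
  obtain ⟨δ, hδ, hfδ⟩ := exists_QModulus h.continuousOn hQmono hf (half_pos hε)
  have h2s : ∀ᶠ s : ℕ in atTop, 1 ≤ 2 ^ s * δ :=
    ((tendsto_pow_atTop_atTop_of_one_lt one_lt_two).atTop_mul_const hδ).eventually_ge_atTop 1
  filter_upwards [h2s] with s hs
  obtain ⟨hint, hintegral⟩ := h.integrable_iterate_transferOp hQsymm hQfun hfint s
  rw [Real.dist_eq, ← hintegral]
  refine (abs_sub_integral_le hint (h.ae_mem_Icc.mono fun u hu => ?_)).trans_lt (half_lt_self hε)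
  exact (hfδ.iterate_transferOp hQsymm hQfun s).abs_sub_le hs hQmono.monotoneOn h.zero h.one hx hu

theorem stmt_18_general
    (Q : ℝ → ℝ) (μ : Measure ℝ) [IsProbabilityMeasure μ]
    (hQcont : ContinuousOn Q (Icc 0 1))
    (hQmono : StrictMonoOn Q (Icc 0 1))
    (hQ0 : Q 0 = 0) (hQ1 : Q 1 = 1)
    (hQsymm : ∀ x ∈ Icc (0:ℝ) 1, Q x = 1 - Q (1 - x))
    (hQfun : ∀ x ∈ Icc (0:ℝ) 1, Q x = 2 * Q (x / (x + 1)))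
    (hμ : ∀ a b : ℝ, 0 ≤ a → a ≤ b → b ≤ 1 →
      μ (Ioc a b) = ENNReal.ofReal (Q b - Q a))
    (d : ℕ → ℝ)
    (hd : ∀ n : ℕ, d n = ∫ x in Icc (0:ℝ) 1, Real.cos (2 * π * n * x) ∂μ)
    (T : (ℝ → ℝ) → (ℝ → ℝ))
    (hT : ∀ (f : ℝ → ℝ) (x : ℝ), T f x = (1 / 2) * f (x / (x + 1)) + (1 / 2) * f (1 / (x + 1)))
:
    ∀ n : ℕ, 1 ≤ n → ∀ x ∈ Icc (0:ℝ) 1,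
      Tendsto (fun s : ℕ => (T^[s] (fun y : ℝ => Real.cos (2 * π * n * y))) x)
        atTop (nhds (d n)) := by
  intro n _ x hx
  have hμQ : IsStieltjesMeasure μ Q := ⟨hQ0, hQ1, hQcont, hμ⟩
  obtain rfl : T = transferOp := funext fun f => funext (hT f)
  rw [hd, Measure.restrict_eq_self_of_ae_mem hμQ.ae_mem_Icc]
  exact hμQ.tendsto_iterate_transferOp hQmono hQsymm hQfun (by fun_prop) hx

theorem stmt_18
    (Q : ℝ → ℝ) (μ : Measure ℝ) [IsProbabilityMeasure μ]
    (hQcont : ContinuousOn Q (Icc 0 1))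
    (hQmono : StrictMonoOn Q (Icc 0 1))
    (hQ0 : Q 0 = 0) (hQ1 : Q 1 = 1)
    (hQsymm : ∀ x ∈ Icc (0:ℝ) 1, Q x = 1 - Q (1 - x))
    (hQfun : ∀ x ∈ Icc (0:ℝ) 1, Q x = 2 * Q (x / (x + 1)))
    (hμ : ∀ a b : ℝ, 0 ≤ a → a ≤ b → b ≤ 1 →
      μ (Ioc a b) = ENNReal.ofReal (Q b - Q a))
    (hμsupp : μ (Icc (0:ℝ) 1)ᶜ = 0)
    (d : ℕ → ℝ)
    (hd : ∀ n : ℕ, d n = ∫ x in Icc (0:ℝ) 1, Real.cos (2 * π * n * x) ∂μ)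
    (T : (ℝ → ℝ) → (ℝ → ℝ))
    (hT : ∀ (f : ℝ → ℝ) (x : ℝ), T f x = (1 / 2) * f (x / (x + 1)) + (1 / 2) * f (1 / (x + 1)))
:
    ∀ n : ℕ, 1 ≤ n → ∀ x ∈ Icc (0:ℝ) 1,
      Tendsto (fun s : ℕ => (T^[s] (fun y : ℝ => Real.cos (2 * π * n * y))) x)
        atTop (nhds (d n)) :=
  stmt_18_general Q μ hQcont hQmono hQ0 hQ1 hQsymm hQfun hμ d hd T hT
end
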